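/- arXiv:2103.08383 — 7 statements merged into one kernel-verified Lean document; each statement's English description precedes it below -/
import Mathlib

section
/- Let $I$ be a countable index set, $(a_i)_{i\in I}$ nonnegative reals with $\sum_{i\in I} a_i = \infty$, and $(A_i)_{i\in I}$ events in a probability space $(\Omega,\mathbb{P})$. Then $\mathbb{P}\left(\left\{\omega : \sum_{i\in I} a_i \mathbf{1}_{A_i}(\omega) = \infty\right\}\right) \geq \liminf_{i\in I} \mathbb{P}(A_i)$. -/
open MeasureTheory Filter

/-- Probabilistic pigeonhole lemma: if `(a i)` are nonnegative reals with infinite sum and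
`(A i)` are events, then the probability that `∑ i, a i * 1_{A i} = ∞` is at least
the liminf (along the cofinite filter on `I`) of the probabilities `P (A i)`. -/
theorem stmt0 {Ω : Type*} [MeasurableSpace Ω] (P : Measure Ω) [IsProbabilityMeasure P]
    {I : Type*} [Countable I] (a : I → NNReal) (A : I → Set Ω)
    (hA : ∀ i, MeasurableSet (A i))
    (ha : ∑' i, (a i : ENNReal) = ⊤) :
    Filter.liminf (fun i => P (A i)) Filter.cofinite ≤
      P {ω | ∑' i, (A i).indicator (fun _ => (a i : ENNReal)) ω = ⊤} := by
  by_contra hcon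
  push_neg at hcon
  set S : Ω → ENNReal := fun ω => ∑' i, (A i).indicator (fun _ => (a i : ENNReal)) ω with hSdef
  have hSm : Measurable S := Measurable.ennreal_tsum fun i => measurable_const.indicator (hA i)
  have hcon' : P {ω | S ω = ⊤} < Filter.liminf (fun i => P (A i)) Filter.cofinite := hcon
  set T : Set Ω := {ω | S ω = ⊤} with hTdef
  have hTm : MeasurableSet T := hSm (measurableSet_singleton ⊤)
  -- pick c strictly between P T and the liminf
  obtain ⟨c, hc1, hc2⟩ := exists_between hcon'
  -- cofinitely many i have c < P (A i)
  have hev : ∀ᶠ i in Filter.cofinite, c < P (A i) :=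
    Filter.eventually_lt_of_lt_liminf hc2
  set J : Set I := {i | c < P (A i)} with hJdef
  have hJc : (Jᶜ : Set I).Finite := by
    have := Filter.eventually_cofinite.mp hev
    simpa [hJdef, Set.compl_setOf] using this
  -- the sum of a over J is infinite
  have hJfin : ∑' i : ↥(Jᶜ), (a i : ENNReal) ≠ ⊤ := by
    haveI : Fintype ↥(Jᶜ) := hJc.fintype
    rw [tsum_fintype]
    exact (ENNReal.sum_lt_top.mpr fun i _ => ENNReal.coe_lt_top).ne
  have hJ : ∑' i : J, (a i : ENNReal) = ⊤ := by
    have hsplit : (∑' i : J, (a i : ENNReal)) + ∑' i : ↥(Jᶜ), (a i : ENNReal) = ⊤ := by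
      rw [Summable.tsum_add_tsum_compl (f := fun i => (a i : ENNReal)) ENNReal.summable
        ENNReal.summable]
      exact ha
    by_contra h
    exact ENNReal.add_ne_top.mpr ⟨h, hJfin⟩ hsplit
  -- Tᶜ = union of the sets {S ≤ n}
  have hCm : ∀ n : ℕ, MeasurableSet {ω | S ω ≤ (n : ENNReal)} := fun n =>
    hSm measurableSet_Iic
  have hTc : Tᶜ = ⋃ n : ℕ, {ω | S ω ≤ (n : ENNReal)} := by
    ext ω
    simp only [hTdef, Set.mem_compl_iff, Set.mem_setOf_eq, Set.mem_iUnion]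
    constructor
    · intro h
      obtain ⟨n, hn⟩ := ENNReal.exists_nat_gt h
      exact ⟨n, hn.le⟩
    · rintro ⟨n, hn⟩
      exact (hn.trans_lt (ENNReal.natCast_lt_top n)).ne
  have hsup : P Tᶜ = ⨆ n : ℕ, P {ω | S ω ≤ (n : ENNReal)} := by
    rw [hTc]
    refine Directed.measure_iUnion (Monotone.directed_le ?_)
    intro m k hmk ω hω
    have hω' : S ω ≤ (m : ENNReal) := hω
    exact le_trans hω' (by exact_mod_cast Nat.cast_le.mpr hmk)
  -- find n with 1 < c + P {S ≤ n}
  have h1 : (1 : ENNReal) < c + P Tᶜ := by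
    calc (1 : ENNReal) = P T + P Tᶜ := (prob_add_prob_compl hTm).symm
    _ < c + P Tᶜ := ENNReal.add_lt_add_right (measure_ne_top P _) hc1
  obtain ⟨n, hn⟩ : ∃ n : ℕ, 1 < c + P {ω | S ω ≤ (n : ENNReal)} := by
    rw [hsup, ENNReal.add_iSup] at h1
    exact lt_iSup_iff.mp h1
  set C : Set Ω := {ω | S ω ≤ (n : ENNReal)} with hCdef
  set ε : ENNReal := c + P C - 1 with hε
  have hε0 : ε ≠ 0 := (tsub_pos_iff_lt.mpr hn).ne'
  have hεle : ∀ i ∈ J, ε ≤ P (A i ∩ C) := by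
    intro i hi
    rw [hε, tsub_le_iff_right]
    calc c + P C ≤ P (A i) + P C := add_le_add_left (le_of_lt hi) _
    _ = P (A i ∪ C) + P (A i ∩ C) := (measure_union_add_inter _ (hCm n)).symm
    _ ≤ 1 + P (A i ∩ C) := by gcongr; exact prob_le_one
    _ = P (A i ∩ C) + 1 := add_comm _ _
  -- compute the integral of S over C
  have hint : ∫⁻ ω in C, S ω ∂P = ∑' i, (a i : ENNReal) * P (A i ∩ C) := by
    rw [hSdef]
    rw [lintegral_tsum fun i => (measurable_const.indicator (hA i)).aemeasurable]
    congr 1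
    funext i
    rw [lintegral_indicator_const (hA i), Measure.restrict_apply (hA i)]
  -- upper bound
  have hub : ∫⁻ ω in C, S ω ∂P ≤ (n : ENNReal) := by
    calc ∫⁻ ω in C, S ω ∂P ≤ ∫⁻ _ in C, (n : ENNReal) ∂P :=
      setLIntegral_mono measurable_const fun ω hω => hω
    _ = (n : ENNReal) * P C := setLIntegral_const _ _
    _ ≤ (n : ENNReal) * 1 := mul_le_mul_right prob_le_one _
    _ = (n : ENNReal) := mul_one _
  -- lower bound
  have hlb : (⊤ : ENNReal) ≤ ∑' i, (a i : ENNReal) * P (A i ∩ C) := by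
    calc (⊤ : ENNReal) = (∑' i : J, (a i : ENNReal)) * ε := by
          rw [hJ, ENNReal.top_mul hε0]
    _ = ∑' i : J, (a i : ENNReal) * ε := ENNReal.tsum_mul_right.symm
    _ ≤ ∑' i : J, (a i : ENNReal) * P ((A i : Set Ω) ∩ C) :=
      ENNReal.tsum_le_tsum fun i => mul_le_mul_right (hεle i i.2) _
    _ ≤ ∑' i, (a i : ENNReal) * P (A i ∩ C) :=
      ENNReal.summable.tsum_le_tsum_of_inj (↑) Subtype.val_injective (fun _ _ => zero_le)
        (fun _ => le_rfl) ENNReal.summable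
  have : (⊤ : ENNReal) ≤ (n : ENNReal) := (hlb.trans_eq hint.symm).trans hub
  exact (ENNReal.natCast_ne_top n) (top_le_iff.mp this)
end

section
/- Let $I$ be a countable index set, $(a_i)_{i\in I}$ nonnegative reals, $(A_i)$ events in a probability space, $0<q$, and suppose $I'\subset I$ is a subset with $\sum_{i\in I'} a_i=\infty$ and $\mathbb{P}(A_i)\geq q$ for all $i\in I'$. Then for every $C>0$, the event $F_C = \{\sum_{i\in I'} a_i \mathbf{1}_{A_i} \leq C\}$ satisfies $\mathbb{P}(F_C) \leq 1-q$. -/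
open MeasureTheory Filter Set

/-- Key step of the pigeonhole lemma: if `(a i)` are nonnegative reals, `(A i)` events,
`0 < q`, and `I'` is a subset of indices on which `∑ a i = ∞` and `P (A i) ≥ q`, then for
every `C > 0` the event `F_C = {∑_{i ∈ I'} a i * 1_{A i} ≤ C}` has `P (F_C) ≤ 1 - q`. -/
theorem stmt2 {Ω : Type*} [MeasurableSpace Ω] (P : Measure Ω) [IsProbabilityMeasure P]
    {I : Type*} [Countable I] (a : I → NNReal) (A : I → Set Ω)
    (hA : ∀ i, MeasurableSet (A i))
    (q : ℝ) (hq : 0 < q) (I' : Set I)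
    (hsum : ∑' i : I', (a i : ENNReal) = ⊤)
    (hq' : ∀ i ∈ I', ENNReal.ofReal q ≤ P (A i))
    (C : ℝ) (hC : 0 < C) :
    P {ω | ∑' i : I', (A i).indicator (fun _ => ((a i : NNReal) : ENNReal)) ω
        ≤ ENNReal.ofReal C} ≤ ENNReal.ofReal (1 - q) := by
  by_contra h
  push_neg at h
  set f : Ω → ENNReal := fun ω => ∑' i : I', (A i).indicator (fun _ => ((a i : NNReal) : ENNReal)) ω
    with hfdef
  have hfm : Measurable f :=
    Measurable.ennreal_tsum fun i => measurable_const.indicator (hA i)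
  set F : Set Ω := {ω | f ω ≤ ENNReal.ofReal C} with hFdef
  have hFm : MeasurableSet F := measurableSet_le hfm measurable_const
  -- I' is nonempty
  have hne : Nonempty I' := by
    rcases isEmpty_or_nonempty I' with h' | h'
    · rw [tsum_empty] at hsum
      exact absurd hsum (by simp)
    · exact h'
  obtain ⟨i₀⟩ := hne
  have hq1 : q ≤ 1 := by
    have := (hq' i₀ i₀.2).trans (prob_le_one (μ := P) (s := A i₀))
    rwa [ENNReal.ofReal_le_one] at this
  have hq1' : ENNReal.ofReal (1 - q) = 1 - ENNReal.ofReal q := by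
    rw [ENNReal.ofReal_sub _ hq.le, ENNReal.ofReal_one]
  set δ : ENNReal := P F - ENNReal.ofReal (1 - q) with hδdef
  have hδ : 0 < δ := tsub_pos_of_lt h
  have hkey : ∀ i : I', δ ≤ P (A i ∩ F) := by
    intro i
    have h1 : F ⊆ (A i ∩ F) ∪ (A i : Set Ω)ᶜ := by
      intro ω hω
      by_cases h' : ω ∈ A (i : I)
      · exact Or.inl ⟨h', hω⟩
      · exact Or.inr h'
    have h2 : P F ≤ P (A i ∩ F) + P (A i : Set Ω)ᶜ :=
      (measure_mono h1).trans (measure_union_le _ _)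
    have h3 : P (A i : Set Ω)ᶜ ≤ ENNReal.ofReal (1 - q) := by
      rw [measure_compl (hA i) (measure_ne_top P _), hq1', measure_univ]
      exact tsub_le_tsub le_rfl (hq' i i.2)
    exact tsub_le_iff_right.mpr (h2.trans (add_le_add_right h3 _))
  have hint : ∑' i : I', (a i : ENNReal) * P (A i ∩ F) = ∫⁻ ω in F, f ω ∂P := by
    rw [hfdef]
    rw [lintegral_tsum (μ := P.restrict F)
      (f := fun i : I' => (A (i : I)).indicator fun _ => ((a (i : I) : NNReal) : ENNReal))
      fun i => (measurable_const.indicator (hA i)).aemeasurable]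
    congr 1
    ext i
    rw [lintegral_indicator_const (μ := P.restrict F) (hA (i : I)),
      Measure.restrict_apply (hA (i : I))]
  have hle : ∫⁻ ω in F, f ω ∂P ≤ ENNReal.ofReal C * P F := by
    calc ∫⁻ ω in F, f ω ∂P ≤ ∫⁻ _ in F, ENNReal.ofReal C ∂P :=
          setLIntegral_mono measurable_const fun ω hω => hω
      _ = ENNReal.ofReal C * P F := setLIntegral_const F _
  have hfin : ∑' i : I', (a i : ENNReal) * P (A i ∩ F) < ⊤ := by
    rw [hint]
    exact hle.trans_lt (ENNReal.mul_lt_top ENNReal.ofReal_lt_top (measure_lt_top P F))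
  have htop : (⊤ : ENNReal) ≤ ∑' i : I', (a i : ENNReal) * P (A i ∩ F) := by
    calc (⊤ : ENNReal) = (∑' i : I', (a i : ENNReal)) * δ := by
          rw [hsum, ENNReal.top_mul hδ.ne']
      _ = ∑' i : I', (a i : ENNReal) * δ := ENNReal.tsum_mul_right.symm
      _ ≤ ∑' i : I', (a i : ENNReal) * P (A i ∩ F) :=
          ENNReal.tsum_le_tsum fun i => mul_le_mul_right (hkey i) _
  exact lt_irrefl _ (htop.trans_lt hfin)
end

section
/- In the setting of local Radon–Nikodym derivatives $z_n = d\nu_n/d\mu_n$ of a locally absolutely continuous pair $\nu \overset{loc}{\ll} \mu$ on a filtered space whose filtration generates the full $\sigma$-algebra, the decomposition $X = \{z_\infty = \infty\} \cup \{z_\infty < \infty\}$ is the Lebesgue decomposition of $\nu$ with respect to $\mu$: $\mu(z_\infty < \infty) = 1$ and for every measurable set $E$, $\nu(E) = \nu(E \cap \{z_\infty = \infty\}) + \int_E z_\infty \, d\mu$. -/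
open MeasureTheory Filter Topology
open scoped ENNReal

lemma trim_rnDeriv_ae_eq_condexp {X : Type*} [m : MeasurableSpace X]
    (μ ρ : Measure X) [IsFiniteMeasure μ] [IsFiniteMeasure ρ]
    {m' : MeasurableSpace X} (hm : m' ≤ m) (hac : μ ≪ ρ) :
    (fun x => ((μ.trim hm).rnDeriv (ρ.trim hm) x).toReal)
      =ᵐ[ρ] ρ[fun x => (μ.rnDeriv ρ x).toReal | m'] := by
  have hsm : StronglyMeasurable[m'] (fun x => ((μ.trim hm).rnDeriv (ρ.trim hm) x).toReal) :=
    (Measure.measurable_rnDeriv _ _).ennreal_toReal.stronglyMeasurable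
  have hint : Integrable (fun x => ((μ.trim hm).rnDeriv (ρ.trim hm) x).toReal) ρ :=
    integrable_of_integrable_trim hm (Measure.integrable_toReal_rnDeriv)
  have hion : ∀ s : Set X, MeasurableSet[m'] s → ρ s < ⊤ →
      Integrable (fun x => ((μ.trim hm).rnDeriv (ρ.trim hm) x).toReal) (ρ.restrict s) :=
    fun s _ _ => hint.restrict
  refine ae_eq_condExp_of_forall_setIntegral_eq hm Measure.integrable_toReal_rnDeriv
    hion (fun s hs _ => ?_)
    (hsm.aestronglyMeasurable)
  rw [setIntegral_trim hm hsm hs,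
    Measure.setIntegral_toReal_rnDeriv (hac.trim hm) s,
    Measure.setIntegral_toReal_rnDeriv hac s,
    measureReal_def, measureReal_def, trim_measurableSet_eq hm hs]

/-- ENNReal-valued a.e. convergence of the trimmed RN derivatives to the global one. -/
lemma tendsto_trim_rnDeriv {X : Type*} [m : MeasurableSpace X]
    (ℱ : Filtration ℕ m) (hgen : (⨆ n, (ℱ n : MeasurableSpace X)) = m)
    (μ ρ : Measure X) [IsFiniteMeasure μ] [IsFiniteMeasure ρ] (hac : μ ≪ ρ) :
    ∀ᵐ x ∂ρ, Tendsto (fun n => (μ.trim (ℱ.le n)).rnDeriv (ρ.trim (ℱ.le n)) x) atTop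
      (𝓝 (μ.rnDeriv ρ x)) := by
  have hint : Integrable (fun x => (μ.rnDeriv ρ x).toReal) ρ := Measure.integrable_toReal_rnDeriv
  have hmeas : StronglyMeasurable[⨆ n, (ℱ n : MeasurableSpace X)]
      (fun x => (μ.rnDeriv ρ x).toReal) := by
    rw [hgen]
    exact (Measure.measurable_rnDeriv _ _).ennreal_toReal.stronglyMeasurable
  have hconv := hint.tendsto_ae_condExp hmeas
  have hbridge : ∀ᵐ x ∂ρ, ∀ n,
      ((μ.trim (ℱ.le n)).rnDeriv (ρ.trim (ℱ.le n)) x).toReal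
        = (ρ[fun x => (μ.rnDeriv ρ x).toReal | ℱ n]) x :=
    ae_all_iff.2 fun n => trim_rnDeriv_ae_eq_condexp μ ρ (ℱ.le n) hac
  have hfin : ∀ᵐ x ∂ρ, ∀ n, (μ.trim (ℱ.le n)).rnDeriv (ρ.trim (ℱ.le n)) x ≠ ⊤ :=
    ae_all_iff.2 fun n => ae_of_ae_trim (ℱ.le n)
      ((Measure.rnDeriv_lt_top _ _).mono fun x hx => hx.ne)
  have hfin0 : ∀ᵐ x ∂ρ, μ.rnDeriv ρ x ≠ ⊤ :=
    (Measure.rnDeriv_lt_top _ _).mono fun x hx => hx.ne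
  filter_upwards [hconv, hbridge, hfin, hfin0] with x hconv hbridge hfin hfin0
  have h1 : Tendsto (fun n => ((μ.trim (ℱ.le n)).rnDeriv (ρ.trim (ℱ.le n)) x).toReal) atTop
      (𝓝 ((μ.rnDeriv ρ x).toReal)) := by
    simp_rw [hbridge]; exact hconv
  have h2 : Tendsto (fun n => ENNReal.ofReal
      ((((μ.trim (ℱ.le n)).rnDeriv (ρ.trim (ℱ.le n))) x).toReal)) atTop
      (𝓝 (ENNReal.ofReal ((μ.rnDeriv ρ x).toReal))) :=
    (ENNReal.continuous_ofReal.tendsto _).comp h1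
  rw [ENNReal.ofReal_toReal hfin0] at h2
  refine h2.congr fun n => ?_
  rw [ENNReal.ofReal_toReal (hfin n)]

lemma rnDeriv_trim_mul {X : Type*} [m : MeasurableSpace X]
    (μ ν ρ : Measure X) [IsFiniteMeasure μ] [IsFiniteMeasure ν] [IsFiniteMeasure ρ]
    {m' : MeasurableSpace X} (hm : m' ≤ m) (hνμ : ν.trim hm ≪ μ.trim hm) (hμρ : μ ≪ ρ) :
    (ν.trim hm).rnDeriv (ρ.trim hm)
      =ᵐ[ρ] fun x => (μ.trim hm).rnDeriv (ρ.trim hm) x * (ν.trim hm).rnDeriv (μ.trim hm) x := by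
  have h1 : (μ.trim hm).withDensity ((ν.trim hm).rnDeriv (μ.trim hm)) = ν.trim hm :=
    Measure.withDensity_rnDeriv_eq _ _ hνμ
  have h2 : (ρ.trim hm).withDensity ((μ.trim hm).rnDeriv (ρ.trim hm)) = μ.trim hm :=
    Measure.withDensity_rnDeriv_eq _ _ (hμρ.trim hm)
  have h3 : (ρ.trim hm).withDensity
      (fun x => (μ.trim hm).rnDeriv (ρ.trim hm) x * (ν.trim hm).rnDeriv (μ.trim hm) x)
      = ν.trim hm := by
    rw [show (fun x => (μ.trim hm).rnDeriv (ρ.trim hm) x * (ν.trim hm).rnDeriv (μ.trim hm) x)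
        = (μ.trim hm).rnDeriv (ρ.trim hm) * (ν.trim hm).rnDeriv (μ.trim hm) from rfl,
      withDensity_mul _ (Measure.measurable_rnDeriv _ _) (Measure.measurable_rnDeriv _ _),
      h2, h1]
  have h4 := Measure.rnDeriv_withDensity (ρ.trim hm)
    ((Measure.measurable_rnDeriv (μ.trim hm) (ρ.trim hm)).mul
      (Measure.measurable_rnDeriv (ν.trim hm) (μ.trim hm)))
  rw [show (μ.trim hm).rnDeriv (ρ.trim hm) * (ν.trim hm).rnDeriv (μ.trim hm)
      = fun x => (μ.trim hm).rnDeriv (ρ.trim hm) x * (ν.trim hm).rnDeriv (μ.trim hm) x from rfl,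
    h3] at h4
  exact ae_eq_of_ae_eq_trim h4

/-- Lebesgue decomposition via local Radon–Nikodym derivatives: if `ν ≪loc μ` on a filtered
space whose filtration generates the σ-algebra, and `z_∞ = limsup_n z_n` with
`z_n = dν_n/dμ_n`, then `μ(z_∞ < ∞) = 1` and for every measurable set `E`,
`ν(E) = ν(E ∩ {z_∞ = ∞}) + ∫_E z_∞ dμ`. -/
theorem stmt10 {X : Type*} [m : MeasurableSpace X]
    (ℱ : Filtration ℕ m) (hgen : (⨆ n, (ℱ n : MeasurableSpace X)) = m)
    (ν μ : Measure X) [IsProbabilityMeasure ν] [IsProbabilityMeasure μ]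
    (hloc : ∀ n, ν.trim (ℱ.le n) ≪ μ.trim (ℱ.le n)) :
    μ {x | Filter.limsup
        (fun n => (ν.trim (ℱ.le n)).rnDeriv (μ.trim (ℱ.le n)) x) atTop < ⊤} = 1 ∧
    ∀ E : Set X, MeasurableSet E →
      ν E = ν (E ∩ {x | Filter.limsup
              (fun n => (ν.trim (ℱ.le n)).rnDeriv (μ.trim (ℱ.le n)) x) atTop = ⊤})
        + ∫⁻ x in E, Filter.limsup
            (fun n => (ν.trim (ℱ.le n)).rnDeriv (μ.trim (ℱ.le n)) x) atTop ∂μ := by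
  set z : ℕ → X → ℝ≥0∞ := fun n => (ν.trim (ℱ.le n)).rnDeriv (μ.trim (ℱ.le n)) with hzdef
  set Z : X → ℝ≥0∞ := fun x => Filter.limsup (fun n => z n x) atTop with hZdef
  set ρ : Measure X := μ + ν with hρdef
  haveI : IsFiniteMeasure ρ := by rw [hρdef]; infer_instance
  have hμρ : μ ≪ ρ := (Measure.le_add_right le_rfl).absolutelyContinuous
  have hνρ : ν ≪ ρ := (Measure.le_add_left le_rfl).absolutelyContinuous
  set u : X → ℝ≥0∞ := μ.rnDeriv ρ with hudef
  set v : X → ℝ≥0∞ := ν.rnDeriv ρ with hvdef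
  have hu_meas : Measurable u := Measure.measurable_rnDeriv _ _
  have hv_meas : Measurable v := Measure.measurable_rnDeriv _ _
  have hμ_eq : ρ.withDensity u = μ := Measure.withDensity_rnDeriv_eq _ _ hμρ
  have hν_eq : ρ.withDensity v = ν := Measure.withDensity_rnDeriv_eq _ _ hνρ
  have hz_meas : ∀ n, Measurable (z n) :=
    fun n => (Measure.measurable_rnDeriv _ _).mono (ℱ.le n) le_rfl
  have hZ_meas : Measurable Z := Measurable.limsup hz_meas
  set S : Set X := {x | Z x = ⊤} with hSdef
  have hS_meas : MeasurableSet S := hZ_meas (measurableSet_singleton ⊤)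
  -- convergence of the trimmed RN derivatives
  have hu_conv := tendsto_trim_rnDeriv ℱ hgen μ ρ hμρ
  have hv_conv := tendsto_trim_rnDeriv ℱ hgen ν ρ hνρ
  have hprod : ∀ᵐ x ∂ρ, ∀ n, (ν.trim (ℱ.le n)).rnDeriv (ρ.trim (ℱ.le n)) x
      = (μ.trim (ℱ.le n)).rnDeriv (ρ.trim (ℱ.le n)) x * z n x :=
    ae_all_iff.2 fun n => rnDeriv_trim_mul μ ν ρ (ℱ.le n) (hloc n) hμρ
  have hufin : ∀ᵐ x ∂ρ, ∀ n, (μ.trim (ℱ.le n)).rnDeriv (ρ.trim (ℱ.le n)) x ≠ ⊤ :=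
    ae_all_iff.2 fun n => ae_of_ae_trim (ℱ.le n)
      ((Measure.rnDeriv_lt_top _ _).mono fun x hx => hx.ne)
  have hufin0 : ∀ᵐ x ∂ρ, u x ≠ ⊤ := (Measure.rnDeriv_lt_top _ _).mono fun x hx => hx.ne
  have hvfin0 : ∀ᵐ x ∂ρ, v x ≠ ⊤ := (Measure.rnDeriv_lt_top _ _).mono fun x hx => hx.ne
  -- u and v do not vanish simultaneously, ρ-a.e.
  have hnz : ∀ᵐ x ∂ρ, ¬(u x = 0 ∧ v x = 0) := by
    have hA : MeasurableSet {x | u x = 0 ∧ v x = 0} :=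
      (hu_meas (measurableSet_singleton 0)).inter (hv_meas (measurableSet_singleton 0))
    have hμA : μ {x | u x = 0 ∧ v x = 0} = 0 := by
      rw [← hμ_eq, withDensity_apply _ hA,
        setLIntegral_congr_fun_ae hA (ae_of_all _ fun x (hx : u x = 0 ∧ v x = 0) => hx.1),
        lintegral_zero]
    have hνA : ν {x | u x = 0 ∧ v x = 0} = 0 := by
      rw [← hν_eq, withDensity_apply _ hA,
        setLIntegral_congr_fun_ae hA (ae_of_all _ fun x (hx : u x = 0 ∧ v x = 0) => hx.2),
        lintegral_zero]
    rw [ae_iff]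
    simp only [not_not]
    rw [hρdef, Measure.add_apply, hμA, hνA, add_zero]
  -- the limsup equals v/u a.e.
  have hZuv : ∀ᵐ x ∂ρ, Z x = v x / u x := by
    filter_upwards [hu_conv, hv_conv, hprod, hufin, hufin0, hnz] with x hu hv hpr hf hf0 hnz
    have hor : v x ≠ 0 ∨ u x ≠ 0 := by
      by_contra h; push_neg at h; exact hnz ⟨h.2, h.1⟩
    have hev : ∀ᶠ n in atTop, (μ.trim (ℱ.le n)).rnDeriv (ρ.trim (ℱ.le n)) x ≠ 0 := by
      rcases eq_or_ne (u x) 0 with h0 | h0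
      · have hv0 : (0 : ℝ≥0∞) < v x :=
          pos_iff_ne_zero.2 (fun h => hnz ⟨h0, h⟩)
        filter_upwards [hv.eventually_const_lt hv0] with n hn hun0
        rw [hpr n, hun0, zero_mul] at hn
        exact lt_irrefl _ hn
      · filter_upwards [hu.eventually_const_lt (pos_iff_ne_zero.2 h0)] with n hn
        exact hn.ne'
    have hev2 : (fun n => (ν.trim (ℱ.le n)).rnDeriv (ρ.trim (ℱ.le n)) x
        / (μ.trim (ℱ.le n)).rnDeriv (ρ.trim (ℱ.le n)) x) =ᶠ[atTop] fun n => z n x := by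
      filter_upwards [hev] with n hn
      exact ((ENNReal.eq_div_iff hn (hf n)).2 (hpr n).symm).symm
    have hdiv := ENNReal.Tendsto.div hv hor hu (Or.inl hf0)
    exact (hdiv.congr' hev2).limsup_eq
  -- on S, u vanishes a.e.
  have hS_u : ∀ᵐ x ∂ρ, x ∈ S → u x = 0 := by
    filter_upwards [hZuv, hvfin0] with x hZx hvf hxS
    by_contra h0
    exact (ENNReal.div_lt_top hvf h0).ne (hZx ▸ hxS)
  have hμS : μ S = 0 := by
    rw [← hμ_eq, withDensity_apply _ hS_meas,
      setLIntegral_congr_fun_ae hS_meas hS_u, lintegral_zero]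
  constructor
  · show μ {x | Z x < ⊤} = 1
    have hcompl : {x | Z x < ⊤} = Sᶜ := by
      ext x; simp [hSdef, lt_top_iff_ne_top]
    rw [hcompl, measure_compl hS_meas (measure_ne_top _ _), hμS, measure_univ, tsub_zero]
  · intro E hE
    show ν E = ν (E ∩ S) + ∫⁻ x in E, Z x ∂μ
    have key : ∀ᵐ x ∂ρ, u x * Z x = Sᶜ.indicator v x := by
      filter_upwards [hZuv, hnz, hufin0, hvfin0] with x hZx hnz hu8 hv8
      rcases eq_or_ne (Z x) ⊤ with htop | htop
      · have hu0 : u x = 0 := by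
          by_contra h0
          exact (ENNReal.div_lt_top hv8 h0).ne (hZx ▸ htop)
        rw [hu0, zero_mul, Set.indicator_of_notMem (by simp [hSdef, htop])]
      · have hu0 : u x ≠ 0 := by
          intro h0
          have hv0 : v x ≠ 0 := fun h => hnz ⟨h0, h⟩
          exact htop (hZx.trans (by rw [h0, ENNReal.div_zero hv0]))
        rw [Set.indicator_of_mem (show x ∈ Sᶜ from htop), hZx, mul_comm,
          ENNReal.div_mul_cancel hu0 hu8]
    have hνE : ν E = ∫⁻ x in E, v x ∂ρ := by rw [← hν_eq, withDensity_apply _ hE]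
    have hνES : ν (E ∩ S) = ∫⁻ x in E ∩ S, v x ∂ρ := by
      rw [← hν_eq, withDensity_apply _ (hE.inter hS_meas)]
    have hμint : ∫⁻ x in E, Z x ∂μ = ∫⁻ x in E, u x * Z x ∂ρ := by
      rw [← hμ_eq, restrict_withDensity hE,
        lintegral_withDensity_eq_lintegral_mul _ hu_meas hZ_meas]
      rfl
    have hind : ∫⁻ x in E, u x * Z x ∂ρ = ∫⁻ x in E ∩ Sᶜ, v x ∂ρ := by
      rw [setLIntegral_congr_fun_ae hE (key.mono fun x h _ => h),
        lintegral_indicator hS_meas.compl, Measure.restrict_restrict hS_meas.compl,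
        Set.inter_comm]
    rw [hνES, hμint, hind, hνE, ← lintegral_inter_add_diff v E hS_meas, Set.diff_eq]
end

section
/- Let $\nu$ be a Markov field on $\mathcal{S}^{\mathbb{I}}$ (a finite-alphabet one- or two-sided sequence space) belonging to the class $\mathscr{S}$, i.e., $\liminf_{\min\{|n|,|m|,|n-m|\}\to\infty} \nu(\mathbb{X}_n = s, \mathbb{X}_m = t) > 0$ for all $s,t\in\mathbb{S}$. Then for every measurable set $E$ with $\nu(E) > 0$, the conditional measure $\nu_E(\cdot) = \nu(\cdot \mid E)$ also belongs to $\mathscr{S}$. -/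
open MeasureTheory ProbabilityTheory Filter Set

noncomputable section

variable {S : Type*} [Fintype S] [MeasurableSpace S] [MeasurableSingletonClass S]

/-- The pair variable `𝕏_n = (X_{-n}, X_n)` on the two-sided sequence space `S^ℤ`. -/
def XX (n : ℕ) (x : ℤ → S) : S × S := (x (-(n : ℤ)), x (n : ℤ))

/-- The natural filtration `𝒜_n = σ(X_i : |i| ≤ n)` on `S^ℤ`. -/
def Acal (S : Type*) [MeasurableSpace S] (n : ℕ) : MeasurableSpace (ℤ → S) :=
  MeasurableSpace.comap (fun x (k : {k : ℤ // |k| ≤ (n : ℤ)}) => x (k : ℤ))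
    MeasurableSpace.pi

/-- `σ(X_k : |k| < n)`. -/
def innerSA (S : Type*) [MeasurableSpace S] (n : ℤ) : MeasurableSpace (ℤ → S) :=
  MeasurableSpace.comap (fun x (k : {k : ℤ // |k| < n}) => x (k : ℤ))
    MeasurableSpace.pi

/-- `σ(X_k : |k| > n)`. -/
def outerSA (S : Type*) [MeasurableSpace S] (n : ℤ) : MeasurableSpace (ℤ → S) :=
  MeasurableSpace.comap (fun x (k : {k : ℤ // n < |k|}) => x (k : ℤ))
    MeasurableSpace.pi

/-- The (two-sided) tail σ-algebra `⋂_{n ≥ 1} σ(X_k : |k| > n)`. -/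
def tailSA (S : Type*) [MeasurableSpace S] : MeasurableSpace (ℤ → S) :=
  ⨅ n : ℕ, outerSA S ((n : ℤ) + 1)

/-- `ν` is a Markov field on `S^ℤ`: for every `n ≥ 1`, `σ(X_k : |k| < n)` and
`σ(X_k : |k| > n)` are conditionally independent given `σ(X_k : |k| = n)`, i.e. given each
atom `{(X_{-n}, X_n) = c}`. -/
def IsMarkovField (ν : Measure (ℤ → S)) : Prop :=
  ∀ n : ℤ, 1 ≤ n → ∀ A B : Set (ℤ → S),
    MeasurableSet[innerSA S n] A → MeasurableSet[outerSA S n] B →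
    ∀ c : S × S,
      ν (A ∩ B ∩ {x | (x (-n), x n) = c}) * ν {x | (x (-n), x n) = c} =
        ν (A ∩ {x | (x (-n), x n) = c}) * ν (B ∩ {x | (x (-n), x n) = c})

/-- `f(n,m) = min {|n|, |m|, |n-m|}` (for indices `n, m ≥ 0`). -/
def fmin (p : ℕ × ℕ) : ℕ := min (min p.1 p.2) (Nat.dist p.1 p.2)

/-- The class `𝒮`: `liminf_{f(n,m) → ∞} ν(𝕏_n = s, 𝕏_m = t) > 0` for all `s, t`. -/
def classS (ν : Measure (ℤ → S)) : Prop :=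
  ∀ s t : S × S,
    0 < Filter.liminf (fun p : ℕ × ℕ => ν {x | XX p.1 x = s ∧ XX p.2 x = t})
        (Filter.comap fmin Filter.atTop)

/-- The class `ℛ`: `liminf_n ν(𝕏_n = s) > 0` for all `s`. -/
def classR (ν : Measure (ℤ → S)) : Prop :=
  ∀ s : S × S, 0 < Filter.liminf (fun n : ℕ => ν {x | XX n x = s}) Filter.atTop

/-! ### Auxiliary lemmas -/

open scoped ENNReal Topology

set_option linter.unusedSectionVars false

/-- The σ-algebra generated by coordinates in a set of indices. -/
def csa (S : Type*) [MeasurableSpace S] (P : ℤ → Prop) : MeasurableSpace (ℤ → S) :=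
  MeasurableSpace.comap (fun x (k : {k : ℤ // P k}) => x (k : ℤ)) MeasurableSpace.pi

lemma measurable_restrict' (P : ℤ → Prop) :
    Measurable (fun (x : ℤ → S) (k : {k : ℤ // P k}) => x (k : ℤ)) :=
  measurable_pi_lambda _ fun _ => measurable_pi_apply _

lemma csa_le (P : ℤ → Prop) : csa S P ≤ (MeasurableSpace.pi : MeasurableSpace (ℤ → S)) :=
  (measurable_restrict' P).comap_le

lemma csa_mono {P Q : ℤ → Prop} (h : ∀ k, P k → Q k) : csa S P ≤ csa S Q := by
  have hg : Measurable (fun (y : {k : ℤ // Q k} → S) (k : {k : ℤ // P k}) =>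
      y ⟨(k : ℤ), h _ k.2⟩) := measurable_pi_lambda _ fun _ => measurable_pi_apply _
  have : (fun (x : ℤ → S) (k : {k : ℤ // P k}) => x (k : ℤ)) =
      (fun (y : {k : ℤ // Q k} → S) (k : {k : ℤ // P k}) => y ⟨(k : ℤ), h _ k.2⟩) ∘
        (fun x (k : {k : ℤ // Q k}) => x (k : ℤ)) := rfl
  rw [csa, this, ← MeasurableSpace.comap_comp]
  exact MeasurableSpace.comap_mono hg.comap_le

lemma acal_eq (N : ℕ) : Acal S N = csa S (fun k => |k| ≤ (N : ℤ)) := rfl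

lemma inner_eq (n : ℤ) : innerSA S n = csa S (fun k => |k| < n) := rfl

lemma outer_eq (n : ℤ) : outerSA S n = csa S (fun k => n < |k|) := rfl

lemma measurableSet_coord {P : ℤ → Prop} {j : ℤ} (hj : P j) (a : S) :
    MeasurableSet[csa S P] {x : ℤ → S | x j = a} :=
  ⟨(fun y : {k : ℤ // P k} → S => y ⟨j, hj⟩) ⁻¹' {a},
    (measurable_pi_apply _) (measurableSet_singleton a), rfl⟩

lemma measurableSet_XX {P : ℤ → Prop} (n : ℕ) (h1 : P (-(n : ℤ))) (h2 : P (n : ℤ))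
    (s : S × S) : MeasurableSet[csa S P] {x : ℤ → S | XX n x = s} := by
  have : {x : ℤ → S | XX n x = s}
      = {x : ℤ → S | x (-(n : ℤ)) = s.1} ∩ {x : ℤ → S | x (n : ℤ) = s.2} := by
    ext x; simp [XX, Prod.ext_iff]
  rw [this]
  exact (measurableSet_coord h1 s.1).inter (measurableSet_coord h2 s.2)

lemma measurable_XX (n : ℕ) : Measurable (XX (S := S) n) :=
  Measurable.prodMk (measurable_pi_apply _) (measurable_pi_apply _)

lemma measurableSet_XX_pi (n : ℕ) (s : S × S) : MeasurableSet {x : ℤ → S | XX n x = s} := by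
  have h : {x : ℤ → S | XX n x = s} = (XX n) ⁻¹' {s} := rfl
  rw [h]
  exact measurable_XX n (measurableSet_singleton s)

lemma measure_eq_sum_atoms (ν : Measure (ℤ → S)) {A : Set (ℤ → S)} (hA : MeasurableSet A)
    (k : ℕ) : ν A = ∑ c : S × S, ν (A ∩ {x | XX k x = c}) := by
  have hcover : A = ⋃ c : S × S, A ∩ {x | XX k x = c} := by
    ext x
    simp only [mem_iUnion, mem_inter_iff, mem_setOf_eq]
    exact ⟨fun hx => ⟨XX k x, hx, rfl⟩, fun ⟨c, hx, _⟩ => hx⟩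
  conv_lhs => rw [hcover]
  rw [measure_iUnion ?_ (fun c => hA.inter (measurableSet_XX_pi k c)), tsum_fintype]
  intro c c' hcc
  refine Set.disjoint_left.2 ?_
  rintro x ⟨-, hx⟩ ⟨-, hx'⟩
  exact hcc (by rw [← hx, ← hx'])

lemma markov_mul_le (ν : Measure (ℤ → S)) [IsProbabilityMeasure ν] (hMF : IsMarkovField ν)
    (k : ℕ) (hk : 1 ≤ k) {A B : Set (ℤ → S)}
    (hA : MeasurableSet[innerSA S (k : ℤ)] A) (hB : MeasurableSet[outerSA S (k : ℤ)] B)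
    (hApi : MeasurableSet A) (hBpi : MeasurableSet B) {δ : ℝ≥0∞}
    (hδ : ∀ c : S × S, δ ≤ ν (B ∩ {x | XX k x = c})) :
    δ * ν A ≤ ν (A ∩ B) := by
  calc δ * ν A = ∑ c : S × S, δ * ν (A ∩ {x | XX k x = c}) := by
        rw [measure_eq_sum_atoms ν hApi k, Finset.mul_sum]
    _ ≤ ∑ c : S × S, ν (A ∩ B ∩ {x | XX k x = c}) := by
        refine Finset.sum_le_sum fun c _ => ?_
        have hid := hMF (k : ℤ) (by exact_mod_cast hk) A B hA hB c
        calc δ * ν (A ∩ {x | XX k x = c})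
            ≤ ν (B ∩ {x | XX k x = c}) * ν (A ∩ {x | XX k x = c}) :=
              mul_le_mul_left (hδ c) _
          _ = ν (A ∩ B ∩ {x | XX k x = c}) * ν {x | XX k x = c} := by
              rw [mul_comm]; exact hid.symm
          _ ≤ ν (A ∩ B ∩ {x | XX k x = c}) :=
              mul_le_of_le_one_right' prob_le_one
    _ = ν (A ∩ B) := (measure_eq_sum_atoms ν (hApi.inter hBpi) k).symm

lemma exists_cyl_approx (ν : Measure (ℤ → S)) [IsFiniteMeasure ν] {E : Set (ℤ → S)}
    (hE : MeasurableSet E) {ε : ℝ≥0∞} (hε : 0 < ε) :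
    ∃ (N : ℕ) (C : Set (ℤ → S)), MeasurableSet[Acal S N] C ∧ ν (symmDiff E C) < ε := by
  classical
  set good : Set (ℤ → S) → Prop := fun F => MeasurableSet F ∧ ∀ ε : ℝ≥0∞, 0 < ε →
    ∃ (N : ℕ) (C : Set (ℤ → S)), MeasurableSet[Acal S N] C ∧ ν (symmDiff F C) < ε with hgood
  have hempty : good ∅ := by
    refine ⟨MeasurableSet.empty, fun ε hε => ⟨0, ∅, @MeasurableSet.empty _ (Acal S 0), ?_⟩⟩
    simp [symmDiff_self, hε]
  have hcompl : ∀ F, good F → good Fᶜ := by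
    rintro F ⟨hFm, hFa⟩
    refine ⟨hFm.compl, fun ε hε => ?_⟩
    obtain ⟨N, C, hC, h⟩ := hFa ε hε
    exact ⟨N, Cᶜ, hC.compl, by rwa [compl_symmDiff_compl]⟩
  have hunion : ∀ f : ℕ → Set (ℤ → S), (∀ i, good (f i)) → good (⋃ i, f i) := by
    intro f hf
    refine ⟨MeasurableSet.iUnion fun i => (hf i).1, fun ε hε => ?_⟩
    have hε2 : 0 < ε / 2 := ENNReal.div_pos hε.ne' ENNReal.ofNat_ne_top
    -- find K with ν(U \ accumulate f K) < ε/2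
    have hU : ν (⋃ i, f i) ≠ ∞ := measure_ne_top ν _
    have hmeas : ∀ K : ℕ, MeasurableSet (accumulate f K) := fun K =>
      MeasurableSet.biUnion (to_countable _) fun i _ => (hf i).1
    have h2 : Tendsto (fun K => ν ((⋃ i, f i) \ accumulate f K)) atTop (𝓝 0) := by
      have heq : ∀ K : ℕ, ν ((⋃ i, f i) \ accumulate f K)
          = ν (⋃ i, f i) - ν (accumulate f K) := fun K =>
        measure_diff (accumulate_subset_iUnion _) (hmeas K).nullMeasurableSet
          (measure_ne_top ν _)
      simp only [heq]
      have := ((ENNReal.continuous_sub_left hU).tendsto (ν (⋃ i, f i))).comp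
        (tendsto_measure_iUnion_accumulate (μ := ν) (f := f))
      simpa [tsub_self, Function.comp_def] using this
    obtain ⟨K, hK⟩ := (h2.eventually_lt_const hε2).exists
    -- approximate each piece
    set η : ℝ≥0∞ := ε / 2 / ((K : ℝ≥0∞) + 1) with hη
    have hη0 : 0 < η := ENNReal.div_pos hε2.ne' (by simp)
    choose N C hC hCν using fun i : ℕ => (hf i).2 η hη0
    set Nmax := (Finset.range (K + 1)).sup N with hNmax
    set Cu := ⋃ i ∈ Finset.range (K + 1), C i with hCu
    have hCuM : MeasurableSet[Acal S Nmax] Cu := by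
      refine MeasurableSet.biUnion (to_countable _) fun i hi => ?_
      have hmono : Acal S (N i) ≤ Acal S Nmax := by
        rw [acal_eq, acal_eq]
        exact csa_mono fun k hk => hk.trans (by exact_mod_cast Finset.le_sup hi)
      exact hmono _ (hC i)
    refine ⟨Nmax, Cu, hCuM, ?_⟩
    have hacc : accumulate f K = ⋃ i ∈ Finset.range (K + 1), f i := by
      ext x
      simp [Set.mem_accumulate, Nat.lt_succ_iff]
    have hsub1 : symmDiff (⋃ i, f i) Cu ⊆
        ((⋃ i, f i) \ accumulate f K) ∪ symmDiff (accumulate f K) Cu := by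
      intro x hx
      rcases Set.mem_symmDiff.1 hx with ⟨hxU, hxC⟩ | ⟨hxC, hxU⟩
      · by_cases hxa : x ∈ accumulate f K
        · exact Or.inr (Set.mem_symmDiff.2 (Or.inl ⟨hxa, hxC⟩))
        · exact Or.inl ⟨hxU, hxa⟩
      · exact Or.inr (Set.mem_symmDiff.2 (Or.inr ⟨hxC,
          fun h => hxU (accumulate_subset_iUnion _ h)⟩))
    have hsub2 : symmDiff (accumulate f K) Cu ⊆
        ⋃ i ∈ Finset.range (K + 1), symmDiff (f i) (C i) := by
      rw [hacc]
      intro x hx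
      rcases Set.mem_symmDiff.1 hx with ⟨hxU, hxC⟩ | ⟨hxC, hxU⟩
      · obtain ⟨i, hi, hxi⟩ := Set.mem_iUnion₂.1 hxU
        refine Set.mem_iUnion₂.2 ⟨i, hi, Set.mem_symmDiff.2 (Or.inl ⟨hxi, fun h => ?_⟩)⟩
        exact hxC (Set.mem_iUnion₂.2 ⟨i, hi, h⟩)
      · obtain ⟨i, hi, hxi⟩ := Set.mem_iUnion₂.1 hxC
        refine Set.mem_iUnion₂.2 ⟨i, hi, Set.mem_symmDiff.2 (Or.inr ⟨hxi, fun h => ?_⟩)⟩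
        exact hxU (Set.mem_iUnion₂.2 ⟨i, hi, h⟩)
    have hb2 : ν (symmDiff (accumulate f K) Cu) ≤ ε / 2 := by
      calc ν (symmDiff (accumulate f K) Cu)
          ≤ ν (⋃ i ∈ Finset.range (K + 1), symmDiff (f i) (C i)) := measure_mono hsub2
        _ ≤ ∑ i ∈ Finset.range (K + 1), ν (symmDiff (f i) (C i)) :=
            measure_biUnion_finset_le _ _
        _ ≤ ∑ _i ∈ Finset.range (K + 1), η := Finset.sum_le_sum fun i _ => (hCν i).le
        _ = ((K : ℝ≥0∞) + 1) * η := by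
            rw [Finset.sum_const, Finset.card_range, nsmul_eq_mul]
            norm_cast
        _ = ε / 2 := ENNReal.mul_div_cancel' (by simp) (by simp)
    calc ν (symmDiff (⋃ i, f i) Cu)
        ≤ ν (((⋃ i, f i) \ accumulate f K) ∪ symmDiff (accumulate f K) Cu) :=
          measure_mono hsub1
      _ ≤ ν ((⋃ i, f i) \ accumulate f K) + ν (symmDiff (accumulate f K) Cu) :=
          measure_union_le _ _
      _ < ε / 2 + ε / 2 :=
          ENNReal.add_lt_add_of_lt_of_le (measure_ne_top ν _) hK hb2
      _ = ε := ENNReal.add_halves ε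
  -- assemble the σ-algebra
  let m : MeasurableSpace (ℤ → S) := ⟨good, hempty, hcompl, hunion⟩
  have hcomap : ∀ j : ℤ,
      MeasurableSpace.comap (fun x : ℤ → S => x j) inferInstance ≤ m := by
    intro j
    rintro F ⟨A, hA, rfl⟩
    refine ⟨(measurable_pi_apply j) hA, fun ε hε => ?_⟩
    have hj : |j| ≤ ((j.natAbs : ℕ) : ℤ) := le_of_eq (Int.abs_eq_natAbs j)
    refine ⟨j.natAbs, (fun x : ℤ → S => x j) ⁻¹' A,
      ⟨(fun y : {k : ℤ // |k| ≤ ((j.natAbs : ℕ) : ℤ)} → S => y ⟨j, hj⟩) ⁻¹' A,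
        (measurable_pi_apply _) hA, rfl⟩, ?_⟩
    simp [symmDiff_self, hε]
  have hle : (MeasurableSpace.pi : MeasurableSpace (ℤ → S)) ≤ m := iSup_le hcomap
  obtain ⟨-, hEa⟩ := hle E hE
  exact hEa ε hε

lemma natdist_sub {a b : ℕ} (h : a ≤ b) : Nat.dist a b = b - a := by
  simp [Nat.dist, Nat.sub_eq_zero_of_le h]

/-- The core estimate: the measure of a cylinder intersected with a distant pair event. -/
lemma core_bound (ν : Measure (ℤ → S)) [IsProbabilityMeasure ν] (hMF : IsMarkovField ν)
    {δ : ℝ≥0∞} {M N : ℕ} {C : Set (ℤ → S)}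
    (hC : MeasurableSet[Acal S N] C) (hCpi : MeasurableSet C)
    (hδ : ∀ (u v : S × S) (p : ℕ × ℕ), M ≤ fmin p →
      δ ≤ ν {x | XX p.1 x = u ∧ XX p.2 x = v})
    (hM : 1 ≤ M) {n m : ℕ} (s t : S × S)
    (hn : max N M + 1 + M ≤ n) (hm : max N M + 1 + M ≤ m)
    (hd : max N M + 1 + M ≤ m - n) (hnm : n < m) :
    δ * (δ * ν C) ≤ ν (C ∩ {x | XX n x = s ∧ XX m x = t}) := by
  set K := max N M + 1 with hK
  have hNK : N < K := by omega
  have hMK : M < K := by omega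
  have hKn : K < n := by omega
  have hnKm : n + K < m := by omega
  -- step 1 : δ * ν C ≤ ν (C ∩ {XX n = s})
  have step1 : δ * ν C ≤ ν (C ∩ {x | XX n x = s}) := by
    refine markov_mul_le ν hMF K (by omega) ?_ ?_ hCpi (measurableSet_XX_pi n s) ?_
    · rw [inner_eq]
      exact csa_mono (fun k hk => lt_of_le_of_lt hk (by exact_mod_cast hNK)) _ hC
    · rw [outer_eq]
      refine measurableSet_XX n ?_ ?_ s
      · rw [abs_neg, abs_of_nonneg (by positivity)]; exact_mod_cast hKn
      · rw [abs_of_nonneg (by positivity)]; exact_mod_cast hKn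
    · intro c
      have heq : {x : ℤ → S | XX n x = s} ∩ {x | XX K x = c}
          = {x | XX K x = c ∧ XX n x = s} := by
        ext x; simp [mem_inter_iff, and_comm]
      rw [heq]
      refine hδ c s (K, n) ?_
      have : Nat.dist K n = n - K := natdist_sub hKn.le
      simp only [fmin, this]
      omega
  -- step 2 : δ * ν (C ∩ {XX n = s}) ≤ ν (C ∩ {XX n = s} ∩ {XX m = t})
  have step2 : δ * ν (C ∩ {x | XX n x = s}) ≤
      ν ((C ∩ {x | XX n x = s}) ∩ {x | XX m x = t}) := by
    refine markov_mul_le ν hMF (n + K) (by omega) ?_ ?_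
      (hCpi.inter (measurableSet_XX_pi n s)) (measurableSet_XX_pi m t) ?_
    · rw [inner_eq]
      refine MeasurableSet.inter ?_ ?_
      · exact csa_mono (fun k hk => lt_of_le_of_lt hk (by exact_mod_cast (by omega : N < n + K))) _ hC
      · refine measurableSet_XX n ?_ ?_ s
        · rw [abs_neg, abs_of_nonneg (by positivity)]; exact_mod_cast (by omega : n < n + K)
        · rw [abs_of_nonneg (by positivity)]; exact_mod_cast (by omega : n < n + K)
    · rw [outer_eq]
      refine measurableSet_XX m ?_ ?_ t
      · rw [abs_neg, abs_of_nonneg (by positivity)]; exact_mod_cast hnKm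
      · rw [abs_of_nonneg (by positivity)]; exact_mod_cast hnKm
    · intro c
      have heq : {x : ℤ → S | XX m x = t} ∩ {x | XX (n + K) x = c}
          = {x | XX (n + K) x = c ∧ XX m x = t} := by
        ext x; simp [mem_inter_iff, and_comm]
      rw [heq]
      refine hδ c t (n + K, m) ?_
      have : Nat.dist (n + K) m = m - (n + K) := natdist_sub hnKm.le
      simp only [fmin, this]
      omega
  have hsets : (C ∩ {x | XX n x = s}) ∩ {x | XX m x = t}
      = C ∩ {x | XX n x = s ∧ XX m x = t} := by
    ext x; simp [mem_inter_iff, and_assoc]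
  calc δ * (δ * ν C) ≤ δ * ν (C ∩ {x | XX n x = s}) := mul_le_mul_right step1 _
    _ ≤ ν ((C ∩ {x | XX n x = s}) ∩ {x | XX m x = t}) := step2
    _ = ν (C ∩ {x | XX n x = s ∧ XX m x = t}) := by rw [hsets]

/-- If a Markov field `ν ∈ 𝒮` and `ν(E) > 0`, then the conditional measure `ν(· | E)`
is again in `𝒮`. -/
theorem stmt11 (ν : Measure (ℤ → S)) [IsProbabilityMeasure ν]
    (hMF : IsMarkovField ν) (hS : classS ν)
    (E : Set (ℤ → S)) (hE : MeasurableSet E) (hpos : 0 < ν E) :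
    classS (ν[|E]) := by
  intro s t
  haveI : Nonempty S := ⟨s.1⟩
  -- uniform positive bound from the class 𝒮 hypothesis
  have huv : ∀ uv : (S × S) × (S × S), ∃ q : ℝ≥0∞ × ℕ, 0 < q.1 ∧
      ∀ p : ℕ × ℕ, q.2 ≤ fmin p →
        q.1 ≤ ν {x | XX p.1 x = uv.1 ∧ XX p.2 x = uv.2} := by
    intro uv
    obtain ⟨a, ha0, ha⟩ := exists_between (hS uv.1 uv.2)
    have hev := Filter.eventually_lt_of_lt_liminf ha
    rw [Filter.eventually_comap] at hev
    rw [Filter.eventually_atTop] at hev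
    obtain ⟨M0, hM0⟩ := hev
    exact ⟨(a, M0), ha0, fun p hp => (hM0 (fmin p) hp p rfl).le⟩
  choose q hq0 hq using huv
  set δ : ℝ≥0∞ :=
    min 1 (Finset.univ.inf' Finset.univ_nonempty (fun uv : (S × S) × (S × S) => (q uv).1))
    with hδdef
  set M : ℕ := (Finset.univ.sup (fun uv : (S × S) × (S × S) => (q uv).2)) + 1 with hMdef
  have hδ0 : 0 < δ := by
    rw [hδdef]
    refine lt_min one_pos ?_
    rw [Finset.lt_inf'_iff]
    exact fun uv _ => hq0 uv
  have hδ1 : δ ≤ 1 := by rw [hδdef]; exact min_le_left _ _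
  have hδtop : δ ≠ ∞ := (hδ1.trans_lt (by simp)).ne
  have hδ : ∀ (u v : S × S) (p : ℕ × ℕ), M ≤ fmin p →
      δ ≤ ν {x | XX p.1 x = u ∧ XX p.2 x = v} := by
    intro u v p hp
    have h1 : δ ≤ (q (u, v)).1 := by
      rw [hδdef]
      exact le_trans (min_le_right _ _) (Finset.inf'_le _ (Finset.mem_univ (u, v)))
    have h2 : (q (u, v)).2 ≤ M := by
      rw [hMdef]
      exact le_trans (Finset.le_sup (f := fun uv : (S × S) × (S × S) => (q uv).2)
        (Finset.mem_univ (u, v))) (Nat.le_add_right _ 1)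
    exact le_trans h1 (hq (u, v) p (le_trans h2 hp))
  have hM1 : 1 ≤ M := by rw [hMdef]; exact Nat.succ_le_succ (Nat.zero_le _)
  -- the target constant
  set a : ℝ≥0∞ := δ * (δ * ν E) with hadef
  have hEtop : ν E ≠ ∞ := measure_ne_top ν _
  have ha0 : a ≠ 0 :=
    (ENNReal.mul_pos hδ0.ne' (ENNReal.mul_pos hδ0.ne' hpos.ne').ne').ne'
  have hatop : a ≠ ∞ := ENNReal.mul_ne_top hδtop (ENNReal.mul_ne_top hδtop hEtop)
  have hε0 : 0 < a / 2 / 2 := ENNReal.div_pos (ENNReal.div_pos ha0 ENNReal.ofNat_ne_top).ne' ENNReal.ofNat_ne_top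
  set ε : ℝ≥0∞ := a / 2 / 2 with hεdef
  -- approximate E by a cylinder set
  obtain ⟨N, C, hC, hsym⟩ := exists_cyl_approx ν hE hε0
  have hCpi : MeasurableSet C := csa_le _ _ hC
  have hEC : ν (E \ C) ≤ ε := by
    refine le_of_lt (lt_of_le_of_lt (measure_mono ?_) hsym)
    rw [Set.symmDiff_def]; exact subset_union_left
  have hCE : ν (C \ E) ≤ ε := by
    refine le_of_lt (lt_of_le_of_lt (measure_mono ?_) hsym)
    rw [Set.symmDiff_def]; exact subset_union_right
  set L : ℕ := max N M + 1 + M with hLdef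
  -- key lower bound for distant pairs, one-sided version
  have main_sub : ∀ (n m : ℕ) (s' t' : S × S), n < m → L ≤ n → L ≤ m → L ≤ m - n →
      a / 2 ≤ ν (E ∩ {x | XX n x = s' ∧ XX m x = t'}) := by
    intro n m s' t' hnm hn hm hd
    set J := {x : ℤ → S | XX n x = s' ∧ XX m x = t'} with hJdef
    have hcore : δ * (δ * ν C) ≤ ν (C ∩ J) :=
      core_bound ν hMF hC hCpi hδ hM1 s' t' hn hm hd hnm
    have h1 : ν (C ∩ J) ≤ ν (E ∩ J) + ε := by
      calc ν (C ∩ J) ≤ ν ((E ∩ J) ∪ (C \ E)) := by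
            refine measure_mono ?_
            rintro x ⟨hxC, hxJ⟩
            by_cases hxE : x ∈ E
            · exact Or.inl ⟨hxE, hxJ⟩
            · exact Or.inr ⟨hxC, hxE⟩
        _ ≤ ν (E ∩ J) + ν (C \ E) := measure_union_le _ _
        _ ≤ ν (E ∩ J) + ε := add_le_add_right hCE _
    have h2 : a ≤ δ * (δ * ν C) + ε := by
      have hEsub : ν E ≤ ν C + ν (E \ C) := by
        refine le_trans (measure_mono ?_) (measure_union_le _ _)
        intro x hx
        by_cases hxC : x ∈ C
        · exact Or.inl hxC
        · exact Or.inr ⟨hx, hxC⟩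
      calc a = δ * (δ * ν E) := hadef
        _ ≤ δ * (δ * (ν C + ν (E \ C))) := by
            exact mul_le_mul_right (mul_le_mul_right hEsub _) _
        _ = δ * (δ * ν C) + δ * (δ * ν (E \ C)) := by ring
        _ ≤ δ * (δ * ν C) + ν (E \ C) := by
            refine add_le_add_right ?_ _
            calc δ * (δ * ν (E \ C)) ≤ 1 * (1 * ν (E \ C)) :=
                  mul_le_mul' hδ1 (mul_le_mul' hδ1 le_rfl)
              _ = ν (E \ C) := by rw [one_mul, one_mul]
        _ ≤ δ * (δ * ν C) + ε := add_le_add_right hEC _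
    have h3 : a ≤ ν (E ∩ J) + a / 2 := by
      calc a ≤ δ * (δ * ν C) + ε := h2
        _ ≤ (ν (E ∩ J) + ε) + ε := add_le_add_left (hcore.trans h1) _
        _ = ν (E ∩ J) + (ε + ε) := by rw [add_assoc]
        _ = ν (E ∩ J) + a / 2 := by rw [hεdef, ENNReal.add_halves]
    have := tsub_le_iff_right.2 h3
    rwa [ENNReal.sub_half hatop] at this
  -- conclude
  have hcpos : 0 < (ν E)⁻¹ * (a / 2) := by
    refine ENNReal.mul_pos ?_ (ENNReal.div_pos ha0 ENNReal.ofNat_ne_top).ne'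
    simp [ENNReal.inv_ne_zero, hEtop]
  refine lt_of_lt_of_le hcpos (Filter.le_liminf_of_le (by isBoundedDefault) ?_)
  rw [Filter.eventually_comap]
  filter_upwards [Filter.eventually_ge_atTop L] with b hb p hpb
  have hfp : L ≤ fmin p := hpb ▸ hb
  have hL1 : 1 ≤ L := by omega
  have hbound : a / 2 ≤ ν (E ∩ {x | XX p.1 x = s ∧ XX p.2 x = t}) := by
    have hne : p.1 ≠ p.2 := by
      intro h
      have : fmin p = 0 := by simp [fmin, h, Nat.dist_self]
      omega
    have hp1 : L ≤ p.1 := le_trans hfp (le_trans (min_le_left _ _) (min_le_left _ _))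
    have hp2 : L ≤ p.2 := le_trans hfp (le_trans (min_le_left _ _) (min_le_right _ _))
    have hpd : L ≤ Nat.dist p.1 p.2 := le_trans hfp (min_le_right _ _)
    rcases lt_or_gt_of_ne hne with hlt | hgt
    · have hd' : L ≤ p.2 - p.1 := by rwa [natdist_sub hlt.le] at hpd
      exact main_sub p.1 p.2 s t hlt hp1 hp2 hd'
    · have hd' : L ≤ p.1 - p.2 := by
        rw [Nat.dist_comm] at hpd
        rwa [natdist_sub hgt.le] at hpd
      have hswap : {x : ℤ → S | XX p.1 x = s ∧ XX p.2 x = t}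
          = {x | XX p.2 x = t ∧ XX p.1 x = s} := by
        ext x; exact and_comm
      rw [hswap]
      exact main_sub p.2 p.1 t s hgt hp2 hp1 hd'
  rw [ProbabilityTheory.cond_apply hE ν]
  exact mul_le_mul_right hbound _
end
end

section
/- Let $\nu$ be a Markov field on $\mathcal{S}^{\mathbb{I}}$ and $T$ a tail event (i.e., $T \in \bigcap_{n\geq 1} \sigma(X_k : |k|>n)$) with $\nu(T) > 0$. Then the conditional measure $\nu_T = \nu(\cdot \mid T)$ is again a Markov field on $\mathcal{S}^{\mathbb{I}}$. -/
open MeasureTheory ProbabilityTheory Filter Set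

noncomputable section

variable {S : Type*} [Fintype S] [MeasurableSpace S] [MeasurableSingletonClass S]

/-- `outerSA` is antitone: more excluded coordinates gives a smaller σ-algebra. -/
lemma outerSA_le_of_le {S : Type*} [MeasurableSpace S] {m n : ℤ} (h : m ≤ n) :
    outerSA S n ≤ outerSA S m := by
  unfold outerSA
  have heq : (fun (x : ℤ → S) (k : {k : ℤ // n < |k|}) => x (k : ℤ)) =
      (fun (y : {k : ℤ // m < |k|} → S) (k : {k : ℤ // n < |k|}) =>
        y ⟨k.1, lt_of_le_of_lt h k.2⟩) ∘
      (fun (x : ℤ → S) (k : {k : ℤ // m < |k|}) => x (k : ℤ)) := rfl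
  rw [heq, ← MeasurableSpace.comap_comp]
  refine MeasurableSpace.comap_mono ?_
  exact (measurable_pi_lambda _ (fun k => measurable_pi_apply _)).comap_le

lemma outerSA_le_ambient {S : Type*} [MeasurableSpace S] (n : ℤ) :
    outerSA S n ≤ (inferInstance : MeasurableSpace (ℤ → S)) :=
  (measurable_pi_lambda _ (fun k => measurable_pi_apply _)).comap_le

lemma tailSA_le_outerSA {S : Type*} [MeasurableSpace S] {n : ℤ} (hn : 1 ≤ n) :
    tailSA S ≤ outerSA S n := by
  have hle := iInf_le (fun m : ℕ => outerSA S ((m : ℤ) + 1)) (n - 1).toNat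
  have : (((n - 1).toNat : ℤ) + 1) = n := by omega
  rw [this] at hle
  exact hle

/-- Conditioning a Markov field on a positive-probability tail event yields a Markov field. -/
theorem stmt14 (ν : Measure (ℤ → S)) [IsProbabilityMeasure ν]
    (hMF : IsMarkovField ν)
    (T : Set (ℤ → S)) (hT : MeasurableSet[tailSA S] T) (hpos : 0 < ν T) :
    IsMarkovField (ν[|T]) := by
  intro n hn A B hA hB c
  set C : Set (ℤ → S) := {x | (x (-n), x n) = c} with hC
  have hTout : MeasurableSet[outerSA S n] T := tailSA_le_outerSA hn T hT
  have hTamb : MeasurableSet T := outerSA_le_ambient n T hTout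
  have hcond : ∀ s : Set (ℤ → S), (ν[|T]) s = (ν T)⁻¹ * ν (T ∩ s) := fun s =>
    cond_apply hTamb ν s
  rw [hcond, hcond, hcond, hcond]
  have key : ν (T ∩ (A ∩ B ∩ C)) * ν (T ∩ C) = ν (T ∩ (A ∩ C)) * ν (T ∩ (B ∩ C)) := by
    rcases eq_or_ne (ν C) 0 with hC0 | hC0
    · have z : ∀ s : Set (ℤ → S), s ⊆ C → ν s = 0 := fun s hs =>
        le_antisymm (le_trans (measure_mono hs) (le_of_eq hC0)) zero_le
      rw [z (T ∩ C) inter_subset_right,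
        z (T ∩ (B ∩ C)) (fun x hx => hx.2.2), mul_zero, mul_zero]
    · have h1 := hMF n hn A (B ∩ T) hA (hB.inter hTout) c
      have h2 := hMF n hn A T hA hTout c
      rw [← hC] at h1 h2
      have e1 : T ∩ (A ∩ B ∩ C) = A ∩ (B ∩ T) ∩ C := by ext x; simp only [mem_inter_iff]; tauto
      have e2 : T ∩ (A ∩ C) = A ∩ T ∩ C := by ext x; simp only [mem_inter_iff]; tauto
      have e3 : T ∩ (B ∩ C) = B ∩ T ∩ C := by ext x; simp only [mem_inter_iff]; tauto
      have e4 : T ∩ C = T ∩ C := rfl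
      rw [e1, e2, e3]
      set a := ν (A ∩ (B ∩ T) ∩ C)
      set b := ν (A ∩ T ∩ C)
      set p := ν (A ∩ C)
      set q := ν (B ∩ T ∩ C)
      set r := ν (T ∩ C)
      have hmul : (a * r) * ν C = (b * q) * ν C := by
        calc (a * r) * ν C = (a * ν C) * r := by ring
        _ = (p * q) * r := by rw [h1]
        _ = (p * r) * q := by ring
        _ = (b * ν C) * q := by rw [h2]
        _ = (b * q) * ν C := by ring
      have hCfin : ν C ≠ ⊤ := measure_ne_top ν C
      calc a * r = (a * r) * ν C * (ν C)⁻¹ := by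
            rw [mul_assoc, ENNReal.mul_inv_cancel hC0 hCfin, mul_one]
        _ = (b * q) * ν C * (ν C)⁻¹ := by rw [hmul]
        _ = b * q := by rw [mul_assoc, ENNReal.mul_inv_cancel hC0 hCfin, mul_one]
  calc (ν T)⁻¹ * ν (T ∩ (A ∩ B ∩ C)) * ((ν T)⁻¹ * ν (T ∩ C))
      = (ν T)⁻¹ * (ν T)⁻¹ * (ν (T ∩ (A ∩ B ∩ C)) * ν (T ∩ C)) := by ring
    _ = (ν T)⁻¹ * (ν T)⁻¹ * (ν (T ∩ (A ∩ C)) * ν (T ∩ (B ∩ C))) := by rw [key]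
    _ = (ν T)⁻¹ * ν (T ∩ (A ∩ C)) * ((ν T)⁻¹ * ν (T ∩ (B ∩ C))) := by ring
end
end

section
/- Let $\nu \in \mathscr{S}$ be a Markov field on $\mathcal{S}^{\mathbb{I}}$ and $T$ a tail event with $\nu(T)>0$. Then $\nu_T = \nu(\cdot\mid T)$ is locally equivalent to $\nu$ with respect to the natural filtration $\mathcal{A}_n = \sigma(X_i : |i|\leq n)$: for every $n$ and every $E\in\mathcal{A}_n$, $\nu(E)>0$ if and only if $\nu_T(E)>0$. -/
open MeasureTheory ProbabilityTheory Filter Set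

noncomputable section

variable {S : Type*} [Fintype S] [MeasurableSpace S] [MeasurableSingletonClass S]

/-- Monotonicity of the σ-algebras generated by sets of coordinates. -/
lemma comap_mono_subtype {P Q : ℤ → Prop} (h : ∀ k, P k → Q k) :
    (MeasurableSpace.comap (fun (x : ℤ → S) (k : {k : ℤ // P k}) => x (k : ℤ))
      MeasurableSpace.pi) ≤
    (MeasurableSpace.comap (fun (x : ℤ → S) (k : {k : ℤ // Q k}) => x (k : ℤ))
      MeasurableSpace.pi) := by
  have heq : (fun (x : ℤ → S) (k : {k : ℤ // P k}) => x (k : ℤ))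
      = (fun (y : {k : ℤ // Q k} → S) (k : {k : ℤ // P k}) => y ⟨(k : ℤ), h k k.2⟩)
        ∘ (fun (x : ℤ → S) (k : {k : ℤ // Q k}) => x (k : ℤ)) := rfl
  rw [heq, ← MeasurableSpace.comap_comp]
  exact MeasurableSpace.comap_mono
    ((measurable_pi_lambda _ fun k => measurable_pi_apply _).comap_le)

lemma Acal_le_innerSA (n : ℕ) (k : ℤ) (h : (n : ℤ) < k) : Acal S n ≤ innerSA S k := by
  rw [Acal, innerSA]
  exact comap_mono_subtype fun j hj => lt_of_le_of_lt hj h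

lemma outerSA_le_pi (k : ℤ) : outerSA S k ≤ MeasurableSpace.pi :=
  (measurable_pi_lambda _ fun j => measurable_pi_apply _).comap_le

lemma Acal_le_pi (n : ℕ) : Acal S n ≤ MeasurableSpace.pi :=
  (measurable_pi_lambda _ fun j => measurable_pi_apply _).comap_le

lemma coord_meas_outer {k j : ℤ} (h : k < |j|) :
    Measurable[outerSA S k] fun x : ℤ → S => x j := by
  have h1 : Measurable[outerSA S k]
      fun x : ℤ → S => (fun (k' : {k' : ℤ // k < |k'|}) => x (k' : ℤ)) :=
    Measurable.of_comap_le le_rfl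
  exact (measurable_pi_apply (⟨j, h⟩ : {k' : ℤ // k < |k'|})).comp h1

lemma XX_meas_outer {k : ℤ} {m : ℕ} (h : k < (m : ℤ)) (hk : 0 ≤ k) (t : S × S) :
    MeasurableSet[outerSA S k] {x : ℤ → S | XX m x = t} := by
  have h1 : k < |(-(m : ℤ))| := by rw [abs_neg, abs_of_nonneg (by positivity)]; exact h
  have h2 : k < |(m : ℤ)| := by rw [abs_of_nonneg (by positivity)]; exact h
  have hmeas : Measurable[outerSA S k] fun x : ℤ → S => (x (-(m : ℤ)), x (m : ℤ)) :=
    (coord_meas_outer h1).prodMk (coord_meas_outer h2)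
  exact hmeas (measurableSet_singleton t)

lemma exists_pos_inter (ν : Measure (ℤ → S)) (E : Set (ℤ → S)) (k : ℕ) (h : 0 < ν E) :
    ∃ c : S × S, 0 < ν (E ∩ {x | XX k x = c}) := by
  by_contra hc
  push_neg at hc
  have h3 : ∀ c : S × S, ν (E ∩ {x | XX k x = c}) = 0 :=
    fun c => le_antisymm (hc c) zero_le
  have h1 : E ⊆ ⋃ c : S × S, E ∩ {x | XX k x = c} :=
    fun x hx => Set.mem_iUnion.2 ⟨XX k x, hx, rfl⟩
  have h2 : ν E ≤ ∑' c : S × S, ν (E ∩ {x | XX k x = c}) :=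
    (measure_mono h1).trans (measure_iUnion_le _)
  simp only [h3, tsum_zero, nonpos_iff_eq_zero] at h2
  exact h.ne' h2

/-- For a Markov field `ν ∈ 𝒮` and a tail event `T` with `ν(T) > 0`, the conditional measure
`ν(· | T)` is locally equivalent to `ν` with respect to the natural filtration
`𝒜_n = σ(X_i : |i| ≤ n)`. -/
theorem stmt15 (ν : Measure (ℤ → S)) [IsProbabilityMeasure ν]
    (hMF : IsMarkovField ν) (hS : classS ν)
    (T : Set (ℤ → S)) (hT : MeasurableSet[tailSA S] T) (hpos : 0 < ν T) :
    ∀ n : ℕ, ∀ E : Set (ℤ → S), MeasurableSet[Acal S n] E →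
      (0 < ν E ↔ 0 < (ν[|T]) E) := by
  have htail_le : ∀ m : ℕ, 1 ≤ m → tailSA S ≤ outerSA S (m : ℤ) := by
    intro m hm
    have h := iInf_le (fun n : ℕ => outerSA S ((n : ℤ) + 1)) (m - 1)
    rwa [show ((m - 1 : ℕ) : ℤ) + 1 = (m : ℤ) by omega] at h
  have hTm : MeasurableSet T :=
    outerSA_le_pi 1 _ ((htail_le 1 le_rfl) _ hT)
  -- extract uniform positivity from classS
  have hev : ∀ᶠ p in comap fmin atTop,
      ∀ s t : S × S, 0 < ν {x | XX p.1 x = s ∧ XX p.2 x = t} := by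
    rw [eventually_all]
    intro s
    rw [eventually_all]
    intro t
    exact eventually_lt_of_lt_liminf (hS s t)
  rw [eventually_comap] at hev
  rw [eventually_atTop] at hev
  obtain ⟨N, hN⟩ := hev
  intro n E hE
  constructor
  · intro hEpos
    set k : ℕ := n + 1 + N with hk
    set m : ℕ := k + N + 1 with hm
    obtain ⟨t, ht⟩ := exists_pos_inter ν T m hpos
    obtain ⟨s, hs⟩ := exists_pos_inter ν E k hEpos
    have hfmin : N ≤ fmin (k, m) := by
      simp only [fmin, Nat.dist]
      omega
    have hst : 0 < ν {x | XX k x = s ∧ XX m x = t} :=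
      hN (fmin (k, m)) hfmin (k, m) rfl s t
    -- Markov at level k
    have hEk : MeasurableSet[innerSA S (k : ℤ)] E :=
      Acal_le_innerSA n (k : ℤ) (by omega) E hE
    have hBk : MeasurableSet[outerSA S (k : ℤ)] {x : ℤ → S | XX m x = t} :=
      XX_meas_outer (by omega) (by positivity) t
    have hMk := hMF (k : ℤ) (by omega) E {x : ℤ → S | XX m x = t} hEk hBk s
    have hCk : {x : ℤ → S | (x (-(k : ℤ)), x (k : ℤ)) = s} = {x | XX k x = s} := rfl
    rw [hCk] at hMk
    have hBC : ({x : ℤ → S | XX m x = t} ∩ {x | XX k x = s})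
        = {x | XX k x = s ∧ XX m x = t} := by
      ext x; exact and_comm
    rw [hBC] at hMk
    have hRHS : 0 < ν (E ∩ {x | XX k x = s}) * ν {x | XX k x = s ∧ XX m x = t} :=
      CanonicallyOrderedAdd.mul_pos.2 ⟨hs, hst⟩
    rw [← hMk] at hRHS
    have hEB : 0 < ν (E ∩ {x : ℤ → S | XX m x = t}) := by
      have h0 := (CanonicallyOrderedAdd.mul_pos.1 hRHS).1
      exact h0.trans_le (measure_mono Set.inter_subset_left)
    -- Markov at level m
    have hEm : MeasurableSet[innerSA S (m : ℤ)] E :=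
      Acal_le_innerSA n (m : ℤ) (by omega) E hE
    have hTom : MeasurableSet[outerSA S (m : ℤ)] T := htail_le m (by omega) _ hT
    have hMm := hMF (m : ℤ) (by omega) E T hEm hTom t
    have hCm : {x : ℤ → S | (x (-(m : ℤ)), x (m : ℤ)) = t} = {x | XX m x = t} := rfl
    rw [hCm] at hMm
    have hTt : 0 < ν (T ∩ {x : ℤ → S | XX m x = t}) := ht
    have hRHS2 : 0 < ν (E ∩ {x : ℤ → S | XX m x = t}) * ν (T ∩ {x : ℤ → S | XX m x = t}) :=
      CanonicallyOrderedAdd.mul_pos.2 ⟨hEB, hTt⟩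
    rw [← hMm] at hRHS2
    have hETC : 0 < ν (E ∩ T ∩ {x : ℤ → S | XX m x = t}) :=
      (CanonicallyOrderedAdd.mul_pos.1 hRHS2).1
    have hTE : 0 < ν (T ∩ E) := by
      refine lt_of_lt_of_le hETC (measure_mono ?_)
      intro x hx
      exact ⟨hx.1.2, hx.1.1⟩
    rw [cond_apply hTm]
    exact CanonicallyOrderedAdd.mul_pos.2
      ⟨ENNReal.inv_pos.2 (measure_ne_top ν T), hTE⟩
  · intro h
    rw [cond_apply hTm] at h
    have := (CanonicallyOrderedAdd.mul_pos.1 h).2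
    exact lt_of_lt_of_le this (measure_mono Set.inter_subset_right)
end
end

section
/- Every Markov field $\nu \in \mathscr{S}$ on $\mathcal{S}^{\mathbb{I}}$ satisfies the tail 0-1 law: $\nu(T) \in \{0,1\}$ for every tail event $T \in \bigcap_{n\geq 1}\sigma(X_k : |k|>n)$. -/
open MeasureTheory ProbabilityTheory Filter Set

noncomputable section

variable {S : Type*} [Fintype S] [MeasurableSpace S] [MeasurableSingletonClass S]

namespace Stmt16

set_option linter.unusedSectionVars false

/-- The atom `{𝕏_n = c}`. -/
def Cs (n : ℕ) (c : S × S) : Set (ℤ → S) := {x | XX n x = c}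

lemma measurable_XX (n : ℕ) : Measurable (XX (S := S) n) :=
  (measurable_pi_apply _).prodMk (measurable_pi_apply _)

lemma Cs_meas (n : ℕ) (c : S × S) : MeasurableSet (Cs (S := S) n c) :=
  measurable_XX n (measurableSet_singleton c)

lemma innerSA_le (n : ℤ) : innerSA S n ≤ (inferInstance : MeasurableSpace (ℤ → S)) :=
  Measurable.comap_le (measurable_pi_lambda _ (fun k => measurable_pi_apply _))

lemma outerSA_le (n : ℤ) : outerSA S n ≤ (inferInstance : MeasurableSpace (ℤ → S)) :=
  Measurable.comap_le (measurable_pi_lambda _ (fun k => measurable_pi_apply _))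

lemma innerSA_mono {n m : ℤ} (h : n ≤ m) : innerSA S n ≤ innerSA S m := by
  have he : (fun (x : ℤ → S) (k : {k : ℤ // |k| < n}) => x (k : ℤ))
      = (fun (y : {k : ℤ // |k| < m} → S) (k : {k : ℤ // |k| < n}) =>
          y ⟨(k : ℤ), lt_of_lt_of_le k.2 h⟩)
        ∘ (fun x (k : {k : ℤ // |k| < m}) => x (k : ℤ)) := rfl
  rw [innerSA, he, ← MeasurableSpace.comap_comp]
  exact MeasurableSpace.comap_mono
    (Measurable.comap_le (measurable_pi_lambda _ fun k => measurable_pi_apply _))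

lemma Cs_mem_inner {n m : ℕ} (h : n < m) (c : S × S) :
    MeasurableSet[innerSA S (m : ℤ)] (Cs (S := S) n c) := by
  have h1 : |(-(n : ℤ))| < (m : ℤ) := by
    rw [abs_neg, abs_of_nonneg (Int.ofNat_nonneg n)]; exact_mod_cast h
  have h2 : |((n : ℤ))| < (m : ℤ) := by
    rw [abs_of_nonneg (Int.ofNat_nonneg n)]; exact_mod_cast h
  have hg : Measurable (fun y : {k : ℤ // |k| < (m : ℤ)} → S =>
      (y ⟨-(n : ℤ), h1⟩, y ⟨(n : ℤ), h2⟩)) :=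
    (measurable_pi_apply _).prodMk (measurable_pi_apply _)
  exact MeasurableSpace.measurableSet_comap.2
    ⟨(fun y : {k : ℤ // |k| < (m : ℤ)} → S => (y ⟨-(n : ℤ), h1⟩, y ⟨(n : ℤ), h2⟩)) ⁻¹' {c},
      hg (measurableSet_singleton c), rfl⟩

lemma T_mem_outer {T : Set (ℤ → S)} (hT : MeasurableSet[tailSA S] T) {m : ℕ} (hm : 1 ≤ m) :
    MeasurableSet[outerSA S (m : ℤ)] T := by
  have hle : tailSA S ≤ outerSA S ((↑(m - 1) : ℤ) + 1) := iInf_le _ (m - 1)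
  have h2 := hle _ hT
  have e : ((↑(m - 1) : ℤ) + 1) = (m : ℤ) := by omega
  rwa [e] at h2

def Pi0 (S : Type*) [MeasurableSpace S] : Set (Set (ℤ → S)) :=
  {A | ∃ j : ℕ, MeasurableSet[innerSA S (j : ℤ)] A}

lemma isPiSystem_Pi0 : IsPiSystem (Pi0 S) := by
  rintro A ⟨j1, hA⟩ B ⟨j2, hB⟩ -
  exact ⟨max j1 j2,
    (innerSA_mono (by exact_mod_cast le_max_left j1 j2) _ hA).inter
    (innerSA_mono (by exact_mod_cast le_max_right j1 j2) _ hB)⟩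

lemma innerSA_le_generate (j : ℕ) :
    innerSA S (j : ℤ) ≤ MeasurableSpace.generateFrom (Pi0 S) := by
  rw [MeasurableSpace.le_def]
  exact fun s hs => MeasurableSpace.measurableSet_generateFrom ⟨j, hs⟩

lemma eval_le_innerSA (k : ℤ) :
    MeasurableSpace.comap (fun x : ℤ → S => x k) inferInstance
      ≤ innerSA S ((k.natAbs + 1 : ℕ) : ℤ) := by
  have hk : |k| < ((k.natAbs + 1 : ℕ) : ℤ) := by
    rw [Int.abs_eq_natAbs]; exact_mod_cast Nat.lt_succ_self _
  have he : (fun x : ℤ → S => x k)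
      = (fun y : {j : ℤ // |j| < ((k.natAbs + 1 : ℕ) : ℤ)} → S => y ⟨k, hk⟩)
        ∘ (fun x (j : {j : ℤ // |j| < ((k.natAbs + 1 : ℕ) : ℤ)}) => x (j : ℤ)) := rfl
  rw [he, ← MeasurableSpace.comap_comp]
  exact MeasurableSpace.comap_mono (Measurable.comap_le (measurable_pi_apply _))

lemma generate_Pi0 :
    (inferInstance : MeasurableSpace (ℤ → S)) = MeasurableSpace.generateFrom (Pi0 S) := by
  apply le_antisymm
  · exact iSup_le fun k => (eval_le_innerSA k).trans (innerSA_le_generate _)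
  · exact MeasurableSpace.generateFrom_le fun A hA => by
      obtain ⟨j, hj⟩ := hA; exact innerSA_le _ _ hj

lemma partition (ν : Measure (ℤ → S)) {E : Set (ℤ → S)} (hE : MeasurableSet E) (m : ℕ) :
    ν E = ∑ c : S × S, ν (E ∩ Cs m c) := by
  have hu : (⋃ c : S × S, Cs (S := S) m c) = univ := by
    ext x; simp only [mem_iUnion, mem_univ, iff_true]; exact ⟨XX m x, rfl⟩
  have hd : Pairwise (Function.onFun Disjoint fun c : S × S => E ∩ Cs (S := S) m c) := by
    refine fun c c' hcc' => Set.disjoint_left.mpr ?_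
    rintro x ⟨-, hx⟩ ⟨-, hx'⟩
    exact hcc' ((show XX m x = c from hx).symm.trans hx')
  calc ν E = ν (⋃ c : S × S, E ∩ Cs m c) := by rw [← inter_iUnion, hu, inter_univ]
    _ = ∑' c : S × S, ν (E ∩ Cs m c) :=
        measure_iUnion hd (fun c => hE.inter (Cs_meas m c))
    _ = ∑ c : S × S, ν (E ∩ Cs m c) := tsum_fintype _

lemma sumKey (ν : Measure (ℤ → S)) [IsProbabilityMeasure ν]
    (hMF : IsMarkovField ν) {T : Set (ℤ → S)} (hT : MeasurableSet[tailSA S] T)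
    (hTm : MeasurableSet T)
    {m : ℕ} (hm : 1 ≤ m) {A : Set (ℤ → S)}
    (hA : MeasurableSet[innerSA S (m : ℤ)] A) (hAm : MeasurableSet A) :
    (ν (T ∩ A)).toReal
      = ∑ d : S × S, ((ν (T ∩ Cs m d)).toReal / (ν (Cs m d)).toReal)
          * (ν (A ∩ Cs m d)).toReal := by
  have h1 : ν (T ∩ A) = ∑ d : S × S, ν ((T ∩ A) ∩ Cs m d) :=
    partition ν (hTm.inter hAm) m
  rw [h1, ENNReal.toReal_sum (fun d _ => measure_ne_top ν _)]
  refine Finset.sum_congr rfl fun d _ => ?_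
  have hM : ν (A ∩ T ∩ Cs m d) * ν (Cs m d) = ν (A ∩ Cs m d) * ν (T ∩ Cs m d) :=
    hMF (m : ℤ) (by exact_mod_cast hm) A T hA (T_mem_outer hT hm) d
  by_cases h0 : ν (Cs m d) = 0
  · have e1 : ν ((T ∩ A) ∩ Cs m d) = 0 := measure_mono_null inter_subset_right h0
    have e2 : ν (A ∩ Cs m d) = 0 := measure_mono_null inter_subset_right h0
    simp [e1, e2]
  · have hfin : ν (Cs (S := S) m d) ≠ ⊤ := measure_ne_top ν _
    have h2 := congrArg ENNReal.toReal hM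
    rw [ENNReal.toReal_mul, ENNReal.toReal_mul] at h2
    have hpos : (ν (Cs (S := S) m d)).toReal ≠ 0 :=
      ENNReal.toReal_ne_zero.2 ⟨h0, hfin⟩
    have e3 : (T ∩ A) ∩ Cs (S := S) m d = A ∩ T ∩ Cs m d := by
      rw [inter_comm T A]
    rw [e3, div_mul_eq_mul_div, eq_div_iff hpos]
    exact h2.trans (mul_comm _ _)

lemma exists_delta [Nonempty S] (ν : Measure (ℤ → S)) (hS : classS ν) :
    ∃ δ : ENNReal, 0 < δ ∧ δ ≤ 1 ∧ ∃ N : ℕ, 1 ≤ N ∧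
      ∀ n m : ℕ, N ≤ fmin (n, m) → ∀ s t : S × S, δ ≤ ν (Cs n s ∩ Cs m t) := by
  have key : ∀ s t : S × S, ∃ δ : ENNReal, 0 < δ ∧ δ ≤ 1 ∧
      ∃ N : ℕ, ∀ pr : ℕ × ℕ, N ≤ fmin pr → δ ≤ ν (Cs pr.1 s ∩ Cs pr.2 t) := by
    intro s t
    obtain ⟨d, hd0, hdlt⟩ := exists_between (hS s t)
    have hev := Filter.eventually_lt_of_lt_liminf hdlt
    rw [Filter.eventually_comap] at hev
    obtain ⟨N, hN⟩ := Filter.eventually_atTop.1 hev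
    refine ⟨min d 1, lt_min hd0 zero_lt_one, min_le_right _ _, N, fun pr hpr => ?_⟩
    have h2 := hN (fmin pr) hpr pr rfl
    have hset : {x | XX pr.1 x = s ∧ XX pr.2 x = t} = Cs pr.1 s ∩ Cs pr.2 t := rfl
    calc min d 1 ≤ d := min_le_left _ _
      _ ≤ _ := by rw [← hset]; exact le_of_lt h2
  choose δf h0 h1 Nf hNf using key
  have hne : (Finset.univ : Finset ((S × S) × (S × S))).Nonempty := Finset.univ_nonempty
  set e0 : (S × S) × (S × S) := Classical.arbitrary _
  refine ⟨Finset.univ.inf' hne (fun st => δf st.1 st.2),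
    (Finset.lt_inf'_iff hne).2 fun b _ => h0 b.1 b.2,
    (Finset.inf'_le _ (Finset.mem_univ e0)).trans (h1 e0.1 e0.2),
    (Finset.univ.sup fun st : (S × S) × (S × S) => Nf st.1 st.2) + 1,
    Nat.le_add_left 1 _, fun n m hnm s t => ?_⟩
  refine (Finset.inf'_le _ (Finset.mem_univ (s, t))).trans (hNf s t (n, m) ?_)
  have hle : Nf s t ≤ Finset.univ.sup fun st : (S × S) × (S × S) => Nf st.1 st.2 :=
    Finset.le_sup (f := fun st : (S × S) × (S × S) => Nf st.1 st.2) (Finset.mem_univ (s, t))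
  omega

end Stmt16

set_option maxHeartbeats 2000000 in
/-- Tail 0-1 law: every Markov field in the class `𝒮` assigns probability `0` or `1` to
every tail event. -/
theorem stmt16 (ν : Measure (ℤ → S)) [IsProbabilityMeasure ν]
    (hMF : IsMarkovField ν) (hS : classS ν)
    (T : Set (ℤ → S)) (hT : MeasurableSet[tailSA S] T) :
    ν T = 0 ∨ ν T = 1 := by
  classical
  have hne : Nonempty S := by
    by_contra h
    have h1 : ν univ = 1 := measure_univ
    have hemp : IsEmpty (ℤ → S) := ⟨fun x => h ⟨x 0⟩⟩
    rw [Set.univ_eq_empty_iff.2 hemp, measure_empty] at h1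
    exact zero_ne_one h1
  obtain ⟨δ, hδ0, hδ1, N, hN1, hδ⟩ := Stmt16.exists_delta ν hS
  have hδtop : δ ≠ ⊤ := ne_top_of_le_ne_top ENNReal.one_ne_top hδ1
  set δt : ℝ := δ.toReal with hδtdef
  have hδt0 : 0 < δt := ENNReal.toReal_pos hδ0.ne' hδtop
  have hTm : MeasurableSet T :=
    Stmt16.outerSA_le ((1 : ℕ) : ℤ) _ (Stmt16.T_mem_outer hT le_rfl)
  set q : ℕ → (S × S) → ℝ := fun n c => (ν (T ∩ Stmt16.Cs n c)).toReal with hqdef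
  set p : ℕ → (S × S) → ℝ := fun n c => (ν (Stmt16.Cs n c)).toReal with hpdef
  set φ : ℕ → (S × S) → ℝ := fun n c => q n c / p n c with hφdef
  have hp1 : ∀ n c, p n c ≤ 1 := by
    intro n c
    have h := ENNReal.toReal_mono (ENNReal.one_ne_top)
      (prob_le_one (μ := ν) (s := Stmt16.Cs n c))
    simpa using h
  have hq0 : ∀ n c, 0 ≤ q n c := fun n c => ENNReal.toReal_nonneg
  have hqp : ∀ n c, q n c ≤ p n c := fun n c =>
    ENNReal.toReal_mono (measure_ne_top ν _) (measure_mono inter_subset_right)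
  have hfminM : ∀ n M : ℕ, 1 ≤ n → n + n ≤ M → fmin (n, M) = n := by
    intro n M h1 h2; simp [fmin, Nat.dist]; omega
  have hppos : ∀ n, N ≤ n → ∀ c, 0 < p n c := by
    intro n hn c
    have hf : N ≤ fmin (n, 2 * n) := by
      rw [hfminM n (2 * n) (hN1.trans hn) (by omega)]; exact hn
    have h2 : δ ≤ ν (Stmt16.Cs n c) :=
      (hδ n (2 * n) hf c c).trans (measure_mono inter_subset_left)
    refine ENNReal.toReal_pos (fun h0 => ?_) (measure_ne_top ν _)
    rw [h0] at h2
    exact hδ0.ne' (le_antisymm h2 zero_le)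
  have hφ0 : ∀ n c, 0 ≤ φ n c := fun n c => div_nonneg (hq0 n c) ENNReal.toReal_nonneg
  have hφ1 : ∀ n c, φ n c ≤ 1 := fun n c =>
    div_le_one_of_le₀ (hqp n c) ENNReal.toReal_nonneg
  have huniv_ne : (Finset.univ : Finset (S × S)).Nonempty := Finset.univ_nonempty
  set β : ℕ → ℝ := fun n => Finset.univ.sup' huniv_ne (φ n) with hβdef
  set γ : ℕ → ℝ := fun n => Finset.univ.inf' huniv_ne (φ n) with hγdef
  have hγle : ∀ n c, γ n ≤ φ n c := fun n c => Finset.inf'_le _ (Finset.mem_univ c)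
  have hleβ : ∀ n c, φ n c ≤ β n := fun n c => Finset.le_sup' _ (Finset.mem_univ c)
  have hβ1 : ∀ n, β n ≤ 1 := fun n => Finset.sup'_le _ _ fun c _ => hφ1 n c
  have hγ0 : ∀ n, 0 ≤ γ n := fun n => Finset.le_inf' _ _ fun c _ => hφ0 n c
  obtain ⟨c₀⟩ : Nonempty (S × S) := inferInstance
  have hγβ : ∀ n, γ n ≤ β n := fun n => (hγle n c₀).trans (hleβ n c₀)
  have hEQ : ∀ n m : ℕ, N ≤ fmin (n, m) → n < m → ∀ c,
      q n c = ∑ d : S × S, φ m d * (ν (Stmt16.Cs n c ∩ Stmt16.Cs m d)).toReal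
      ∧ (∑ d : S × S, (ν (Stmt16.Cs n c ∩ Stmt16.Cs m d)).toReal) = p n c
      ∧ ∀ d, δt ≤ (ν (Stmt16.Cs n c ∩ Stmt16.Cs m d)).toReal := by
    intro n m hf hnm c
    have hfm : fmin (n, m) ≤ m := le_trans (min_le_left _ _) (min_le_right n m)
    have hm1 : 1 ≤ m := le_trans hN1 (le_trans hf hfm)
    refine ⟨?_, ?_, fun d => ENNReal.toReal_mono (measure_ne_top ν _) (hδ n m hf c d)⟩
    · exact Stmt16.sumKey ν hMF hT hTm hm1 (Stmt16.Cs_mem_inner hnm c) (Stmt16.Cs_meas n c)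
    · have hpart : ν (Stmt16.Cs n c) = ∑ d : S × S, ν (Stmt16.Cs n c ∩ Stmt16.Cs m d) :=
        Stmt16.partition ν (Stmt16.Cs_meas n c) m
      have h := congrArg ENNReal.toReal hpart
      rw [ENNReal.toReal_sum (fun d _ => measure_ne_top ν _)] at h
      exact h.symm
  have hkey : ∀ n m : ℕ, N ≤ fmin (n, m) → n < m → N ≤ n → N ≤ m → ∀ c,
      γ m + (β m - γ m) * δt ≤ φ n c ∧ φ n c ≤ β m - (β m - γ m) * δt := by
    intro n m hf hnm hn hm c
    obtain ⟨hsum, hwsum, hw⟩ := hEQ n m hf hnm c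
    have hpc := hppos n hn c
    have hβγ : 0 ≤ β m - γ m := sub_nonneg.2 (hγβ m)
    have hsδ : 0 ≤ (β m - γ m) * δt := mul_nonneg hβγ hδt0.le
    have hwnn : ∀ d : S × S, (0:ℝ) ≤ (ν (Stmt16.Cs n c ∩ Stmt16.Cs m d)).toReal :=
      fun d => ENNReal.toReal_nonneg
    have hpp : (β m - γ m) * δt * p n c ≤ (β m - γ m) * δt :=
      mul_le_of_le_one_right hsδ (hp1 n c)
    constructor
    · obtain ⟨d₁, -, hd₁⟩ := Finset.exists_max_image Finset.univ (φ m) huniv_ne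
      have hβm : β m ≤ φ m d₁ := Finset.sup'_le _ _ fun b _ => hd₁ b (Finset.mem_univ b)
      have hsplit : q n c = φ m d₁ * (ν (Stmt16.Cs n c ∩ Stmt16.Cs m d₁)).toReal
          + ∑ d ∈ Finset.univ.erase d₁, φ m d * (ν (Stmt16.Cs n c ∩ Stmt16.Cs m d)).toReal := by
        rw [hsum, ← Finset.add_sum_erase _ _ (Finset.mem_univ d₁)]
      have hrest : γ m * ∑ d ∈ Finset.univ.erase d₁,
            (ν (Stmt16.Cs n c ∩ Stmt16.Cs m d)).toReal
          ≤ ∑ d ∈ Finset.univ.erase d₁, φ m d * (ν (Stmt16.Cs n c ∩ Stmt16.Cs m d)).toReal := by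
        rw [Finset.mul_sum]
        exact Finset.sum_le_sum fun d _ => mul_le_mul_of_nonneg_right (hγle m d) (hwnn d)
      have herase : ∑ d ∈ Finset.univ.erase d₁, (ν (Stmt16.Cs n c ∩ Stmt16.Cs m d)).toReal
          = p n c - (ν (Stmt16.Cs n c ∩ Stmt16.Cs m d₁)).toReal := by
        rw [Finset.sum_erase_eq_sub (Finset.mem_univ d₁), hwsum]
      have hwd := hw d₁
      have hmm : (β m - γ m) * δt
          ≤ (φ m d₁ - γ m) * (ν (Stmt16.Cs n c ∩ Stmt16.Cs m d₁)).toReal :=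
        mul_le_mul (by linarith) hwd hδt0.le (by linarith [hγle m d₁])
      have hq1 : γ m * p n c + (β m - γ m) * δt ≤ q n c := by
        rw [herase] at hrest
        nlinarith [hrest, hmm, hsplit]
      have hgoal : (γ m + (β m - γ m) * δt) * p n c ≤ q n c := by nlinarith [hq1, hpp, hγ0 m]
      show _ ≤ q n c / p n c
      rw [le_div_iff₀ hpc]
      exact hgoal
    · obtain ⟨d₀, -, hd₀⟩ := Finset.exists_min_image Finset.univ (φ m) huniv_ne
      have hγm : φ m d₀ ≤ γ m := Finset.le_inf' _ _ fun b _ => hd₀ b (Finset.mem_univ b)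
      have hsplit : q n c = φ m d₀ * (ν (Stmt16.Cs n c ∩ Stmt16.Cs m d₀)).toReal
          + ∑ d ∈ Finset.univ.erase d₀, φ m d * (ν (Stmt16.Cs n c ∩ Stmt16.Cs m d)).toReal := by
        rw [hsum, ← Finset.add_sum_erase _ _ (Finset.mem_univ d₀)]
      have hrest : ∑ d ∈ Finset.univ.erase d₀, φ m d * (ν (Stmt16.Cs n c ∩ Stmt16.Cs m d)).toReal
          ≤ β m * ∑ d ∈ Finset.univ.erase d₀, (ν (Stmt16.Cs n c ∩ Stmt16.Cs m d)).toReal := by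
        rw [Finset.mul_sum]
        exact Finset.sum_le_sum fun d _ => mul_le_mul_of_nonneg_right (hleβ m d) (hwnn d)
      have herase : ∑ d ∈ Finset.univ.erase d₀, (ν (Stmt16.Cs n c ∩ Stmt16.Cs m d)).toReal
          = p n c - (ν (Stmt16.Cs n c ∩ Stmt16.Cs m d₀)).toReal := by
        rw [Finset.sum_erase_eq_sub (Finset.mem_univ d₀), hwsum]
      have hwd := hw d₀
      have hmm : (β m - γ m) * δt
          ≤ (β m - φ m d₀) * (ν (Stmt16.Cs n c ∩ Stmt16.Cs m d₀)).toReal :=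
        mul_le_mul (by linarith) hwd hδt0.le (by linarith [hleβ m d₀])
      have hq2 : q n c ≤ β m * p n c - (β m - γ m) * δt := by
        rw [herase] at hrest
        nlinarith [hrest, hmm, hsplit]
      show q n c / p n c ≤ _
      rw [div_le_iff₀ hpc]
      nlinarith [hq2, hpp]
  have hspread : ∀ n, N ≤ n → β n - γ n ≤ (1 - 2 * δt) * (β (2 * n) - γ (2 * n)) := by
    intro n hn
    have hn1 : 1 ≤ n := hN1.trans hn
    have hf : N ≤ fmin (n, 2 * n) := by
      rw [hfminM n (2 * n) hn1 (by omega)]; exact hn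
    have hub : β n ≤ β (2 * n) - (β (2 * n) - γ (2 * n)) * δt :=
      Finset.sup'_le _ _ fun c _ => (hkey n (2 * n) hf (by omega) hn (by omega) c).2
    have hlb : γ (2 * n) + (β (2 * n) - γ (2 * n)) * δt ≤ γ n :=
      Finset.le_inf' _ _ fun c _ => (hkey n (2 * n) hf (by omega) hn (by omega) c).1
    nlinarith [hub, hlb]
  set qr : ℝ := max (1 - 2 * δt) 0 with hqrdef
  have hqr0 : 0 ≤ qr := le_max_right _ _
  have hqr1 : qr < 1 := max_lt (by linarith) one_pos
  have hiter : ∀ k n, N ≤ n → β n - γ n ≤ qr ^ k := by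
    intro k
    induction k with
    | zero => intro n hn; rw [pow_zero]; linarith [hβ1 n, hγ0 n]
    | succ k ih =>
      intro n hn
      have h1 := hspread n hn
      have h2 := ih (2 * n) (by omega)
      have h3 : 0 ≤ β (2 * n) - γ (2 * n) := sub_nonneg.2 (hγβ (2 * n))
      rcases le_or_gt (1 - 2 * δt) 0 with h | h
      · have h4 : β n - γ n ≤ 0 := by nlinarith [h1, h3]
        exact h4.trans (pow_nonneg hqr0 _)
      · calc β n - γ n ≤ (1 - 2 * δt) * (β (2 * n) - γ (2 * n)) := h1
          _ ≤ qr * qr ^ k := mul_le_mul (le_max_left _ _) h2 h3 hqr0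
          _ = qr ^ (k + 1) := (pow_succ' qr k).symm
  have hzero : ∀ n, N ≤ n → β n = γ n := by
    intro n hn
    have h0 : β n - γ n ≤ 0 :=
      ge_of_tendsto (tendsto_pow_atTop_nhds_zero_of_lt_one hqr0 hqr1)
        (Filter.Eventually.of_forall fun k => hiter k n hn)
    linarith [hγβ n]
  have hsame : ∀ n, N ≤ n → ∀ c c', φ n c = φ n c' := by
    intro n hn c c'
    have h := hzero n hn
    have h1 := hγle n c; have h2 := hleβ n c
    have h3 := hγle n c'; have h4 := hleβ n c'
    linarith
  have hcross : ∀ n m : ℕ, N ≤ fmin (n, m) → n < m → N ≤ n → N ≤ m → ∀ c c',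
      φ n c = φ m c' := by
    intro n m hf hnm hn hm c c'
    obtain ⟨hsum, hwsum, -⟩ := hEQ n m hf hnm c
    have hsum2 : q n c = φ m c' * p n c := by
      rw [hsum, ← hwsum, Finset.mul_sum]
      exact Finset.sum_congr rfl fun d _ => by rw [hsame m hm d c']
    have hpc := (hppos n hn c).ne'
    show q n c / p n c = φ m c'
    rw [hsum2, mul_div_assoc, div_self hpc, mul_one]
  have hL : ∀ n, N ≤ n → ∀ c, φ n c = φ N c₀ := by
    intro n hn c
    have hn1 : 1 ≤ n := hN1.trans hn
    have h1 : φ n c = φ (2 * (n + N)) c₀ :=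
      hcross n (2 * (n + N)) (by rw [hfminM n (2 * (n + N)) hn1 (by omega)]; exact hn)
        (by omega) hn (by omega) c c₀
    have h2 : φ N c₀ = φ (2 * (n + N)) c₀ :=
      hcross N (2 * (n + N)) (by rw [hfminM N (2 * (n + N)) hN1 (by omega)])
        (by omega) le_rfl (by omega) c₀ c₀
    rw [h1, h2]
  set L : ℝ := φ N c₀ with hLdef
  have hTA : ∀ A : Set (ℤ → S), A ∈ Stmt16.Pi0 S →
      (ν (T ∩ A)).toReal = L * (ν A).toReal := by
    rintro A ⟨j, hjA⟩
    set m := N + j + 1 with hm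
    have hAm : MeasurableSet A := Stmt16.innerSA_le _ _ hjA
    have hA' : MeasurableSet[innerSA S (m : ℤ)] A :=
      Stmt16.innerSA_mono (by exact_mod_cast (by omega : j ≤ m)) _ hjA
    have hsum := Stmt16.sumKey ν hMF hT hTm (by omega : 1 ≤ m) hA' hAm
    rw [hsum]
    have hstep : ∀ d : S × S,
        ((ν (T ∩ Stmt16.Cs m d)).toReal / (ν (Stmt16.Cs m d)).toReal)
          * (ν (A ∩ Stmt16.Cs m d)).toReal
        = L * (ν (A ∩ Stmt16.Cs m d)).toReal := by
      intro d
      have h := hL m (by omega) d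
      rw [show ((ν (T ∩ Stmt16.Cs m d)).toReal / (ν (Stmt16.Cs m d)).toReal) = φ m d from rfl, h]
    rw [Finset.sum_congr rfl fun d _ => hstep d, ← Finset.mul_sum,
      ← ENNReal.toReal_sum (fun (d : S × S) _ => measure_ne_top ν _),
      ← Stmt16.partition ν hAm m]
  have hLT : L = (ν T).toReal := by
    have h := hTA univ ⟨1, MeasurableSet.univ⟩
    rw [inter_univ] at h
    rw [h, measure_univ]
    simp
  have hmul : ∀ A : Set (ℤ → S), A ∈ Stmt16.Pi0 S → ν (T ∩ A) = ν T * ν A := by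
    intro A hA
    have h := hTA A hA
    rw [hLT] at h
    refine (ENNReal.toReal_eq_toReal_iff' (measure_ne_top ν _)
      (ENNReal.mul_ne_top (measure_ne_top ν _) (measure_ne_top ν _))).1 ?_
    rw [ENNReal.toReal_mul]
    exact h
  have hext : ν.restrict T = (ν T) • ν := by
    refine ext_of_generate_finite (Stmt16.Pi0 S) Stmt16.generate_Pi0
      Stmt16.isPiSystem_Pi0 ?_ ?_
    · intro A hA
      obtain ⟨j, hjA⟩ := hA
      have hAm : MeasurableSet A := Stmt16.innerSA_le _ _ hjA
      rw [Measure.restrict_apply hAm, Measure.smul_apply, smul_eq_mul, inter_comm,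
        hmul A ⟨j, hjA⟩]
    · rw [Measure.restrict_apply_univ, Measure.smul_apply, smul_eq_mul, measure_univ, mul_one]
  have hTT : ν T = ν T * ν T := by
    calc ν T = ν.restrict T T := by rw [Measure.restrict_apply hTm, inter_self]
      _ = ((ν T) • ν) T := by rw [hext]
      _ = ν T * ν T := by rw [Measure.smul_apply, smul_eq_mul]
  set r : ℝ := (ν T).toReal with hrdef
  have hrr : r = r * r := by
    have h := congrArg ENNReal.toReal hTT
    rwa [ENNReal.toReal_mul] at h
  have hfact : r * (1 - r) = 0 := by nlinarith [hrr]
  rcases mul_eq_zero.1 hfact with h | h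
  · left
    exact ((ENNReal.toReal_eq_zero_iff _).1 h).resolve_right (measure_ne_top ν T)
  · right
    exact (ENNReal.toReal_eq_one_iff _).1 (by linarith : r = 1)
end
end
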